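/- arXiv:1109.1634 — 5 statements merged into one kernel-verified Lean document; each statement's English description precedes it below -/
import Mathlib

section
/- Define the Catalan generating series ca(a,b,t) = (1 − (a+b)t − √(1 − 2(a+b)t + (b−a)²t²))/(2abt) = Σ_{n≥1} ca_n(a,b) t^n as a formal power series. Then for all n ≥ 1, ca_n(a,b) = Σ_{i=0}^{n−1} T(n,i+1) a^i b^{n−1−i}, where T(n,k) = (1/k)·C(n−1,k−1)·C(n,k−1) are the Narayana numbers. -/
/-!
Both sides obey the same three-term recurrence. Differentiating `q X c² + X = (1 - p X) c` and
using that `w = 1 - p X - 2 q X c` squares to the discriminant `Δ = (1 - p X)² - 4 q X²` gives the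
linear equation `Δ · X c' = 2 X - (1 - p X) c`, i.e.
`(n + 3) c_{n+2} + n (p² - 4q) c_n = (2n + 3) p c_{n+1}` with `c_0 = 0`, `c_1 = 1`.
For `p = a + b`, `q = a b` the Narayana polynomials satisfy this recurrence too: comparing
coefficients of `aⁱ bʲ`, it becomes a rational identity in `i, j` once every shifted Narayana
number is written as a hypergeometric multiple of `T(i + j + 1, i + 1)`.
-/

open PowerSeries

/-- Narayana numbers `T(n,k) = (1/k)·C(n−1,k−1)·C(n,k−1)`. -/
noncomputable def narayana (n k : ℕ) : ℚ :=
  (1 / (k : ℚ)) * (Nat.choose (n - 1) (k - 1)) * (Nat.choose n (k - 1))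

open Nat Finset

/-- The coefficient `T(i + j + 1, i + 1)` of `aⁱ bʲ` in the Narayana polynomial, extended by zero to
`ℤ²` so that the contiguous relations below hold without boundary cases. -/
noncomputable def narayanaCoeff : ℤ → ℤ → ℚ
  | .ofNat i, .ofNat j => (i + j)! * (i + j + 1)! / (i ! * (i + 1)! * j ! * (j + 1)!)
  | _, _ => 0

@[simp] lemma narayanaCoeff_natCast (i j : ℕ) :
    narayanaCoeff i j = (i + j)! * (i + j + 1)! / (i ! * (i + 1)! * j ! * (j + 1)!) := rfl

lemma narayanaCoeff_of_neg_left {i : ℤ} (hi : i < 0) (j : ℤ) : narayanaCoeff i j = 0 := by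
  obtain ⟨k, rfl⟩ := Int.exists_eq_neg_ofNat hi.le
  cases k with
  | zero => simp at hi
  | succ k => cases j <;> rfl

lemma narayanaCoeff_comm (i j : ℤ) : narayanaCoeff i j = narayanaCoeff j i := by
  rcases i with i | i <;> rcases j with j | j
  · simp only [Int.ofNat_eq_natCast, narayanaCoeff_natCast, add_comm j i]
    ring
  all_goals rfl

lemma narayanaCoeff_of_neg_right (i : ℤ) {j : ℤ} (hj : j < 0) : narayanaCoeff i j = 0 := by
  rw [narayanaCoeff_comm, narayanaCoeff_of_neg_left hj]

lemma narayana_eq_narayanaCoeff (i j : ℕ) : narayana (i + j + 1) (i + 1) = narayanaCoeff i j := by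
  rw [narayana, narayanaCoeff_natCast, add_tsub_cancel_right, add_tsub_cancel_right,
    Nat.cast_choose ℚ (le_add_right i j), Nat.cast_choose ℚ (by omega : i ≤ i + j + 1),
    show i + j - i = j by omega, show i + j + 1 - i = j + 1 by omega]
  push_cast [Nat.factorial_succ]
  field_simp

lemma narayanaCoeff_sub_one_left (i j : ℤ) :
    (i + j) * (i + j + 1) * narayanaCoeff (i - 1) j = i * (i + 1) * narayanaCoeff i j := by
  rcases lt_or_ge i 0 with hi | hi
  · simp [narayanaCoeff_of_neg_left hi, narayanaCoeff_of_neg_left (by omega : i - 1 < 0)]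
  rcases lt_or_ge j 0 with hj | hj
  · simp [narayanaCoeff_of_neg_right _ hj]
  lift i to ℕ using hi
  lift j to ℕ using hj
  cases i with
  | zero => simp [narayanaCoeff_of_neg_left]
  | succ i =>
    rw [show ((i + 1 : ℕ) : ℤ) - 1 = i by push_cast; ring, narayanaCoeff_natCast,
      narayanaCoeff_natCast, show i + 1 + j = i + j + 1 by ring]
    push_cast [Nat.factorial_succ]
    field_simp
    ring

lemma narayanaCoeff_sub_one_right (i j : ℤ) :
    (i + j) * (i + j + 1) * narayanaCoeff i (j - 1) = j * (j + 1) * narayanaCoeff i j := by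
  rw [narayanaCoeff_comm, narayanaCoeff_comm i, add_comm (i : ℚ)]
  exact_mod_cast narayanaCoeff_sub_one_left j i

lemma narayanaCoeff_recurrence (i j : ℤ) (m : ℕ) (hij : i + j = m + 2) :
    (m + 4) * narayanaCoeff i j
        + (m + 1) * (narayanaCoeff (i - 2) j - 2 * narayanaCoeff (i - 1) (j - 1)
          + narayanaCoeff i (j - 2))
      = (2 * m + 5) * (narayanaCoeff (i - 1) j + narayanaCoeff i (j - 1)) := by
  have hs : (i + j : ℚ) = m + 2 := by exact_mod_cast hij
  have h10 := narayanaCoeff_sub_one_left i j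
  have h01 := narayanaCoeff_sub_one_right i j
  have h20 := narayanaCoeff_sub_one_left (i - 1) j
  have h11 := narayanaCoeff_sub_one_right (i - 1) j
  have h02 := narayanaCoeff_sub_one_right i (j - 1)
  rw [sub_sub, one_add_one_eq_two] at h20 h02
  push_cast at h20 h11 h02
  have e : (i : ℚ) = m + 2 - j := by linarith
  rw [e] at h10 h01 h20 h11 h02
  have hpos : ((m : ℚ) + 1) * (m + 2) * ((m + 2) * (m + 3)) ≠ 0 := by positivity
  refine mul_left_cancel₀ hpos ?_
  linear_combination ((m : ℚ) + 1) * (m + 2) * (m + 3) * (h20 - 2 * h11 + h02)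
    + ((m + 1) * ((m + 1 - j) * (m + 2 - j) - 2 * j * (j + 1))
      - (2 * m + 5) * (m + 1) * (m + 2)) * h10
    + ((m + 1) * (j - 1) * j - (2 * m + 5) * (m + 1) * (m + 2)) * h01

section NarayanaPolynomial

variable {R : Type*} [CommRing R] [Algebra ℚ R]

noncomputable def antidiagonalSum (f : ℤ → ℤ → ℚ) (a b : R) (k : ℕ) : R :=
  ∑ p ∈ antidiagonal k, f p.1 p.2 • (a ^ p.1 * b ^ p.2)

lemma mul_antidiagonalSum_left (f : ℤ → ℤ → ℚ) (hf : ∀ j, f (-1) j = 0) (a b : R) (k : ℕ) :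
    a * antidiagonalSum f a b k = antidiagonalSum (fun i j ↦ f (i - 1) j) a b (k + 1) := by
  simp only [antidiagonalSum, Nat.sum_antidiagonal_succ, mul_sum, Nat.cast_zero, zero_sub, hf,
    zero_smul, zero_add, Nat.cast_succ, add_sub_cancel_right]
  refine sum_congr rfl fun p _ ↦ ?_
  rw [mul_smul_comm, pow_succ]
  ring_nf

lemma mul_antidiagonalSum_right (f : ℤ → ℤ → ℚ) (hf : ∀ i, f i (-1) = 0) (a b : R) (k : ℕ) :
    b * antidiagonalSum f a b k = antidiagonalSum (fun i j ↦ f i (j - 1)) a b (k + 1) := by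
  simp only [antidiagonalSum, Nat.sum_antidiagonal_succ', mul_sum, Nat.cast_zero, zero_sub, hf,
    zero_smul, zero_add, Nat.cast_succ, add_sub_cancel_right]
  refine sum_congr rfl fun p _ ↦ ?_
  rw [mul_smul_comm, pow_succ]
  ring_nf

lemma antidiagonalSum_narayanaCoeff_recurrence (a b : R) (m : ℕ) :
    ((m : R) + 4) * antidiagonalSum narayanaCoeff a b (m + 2)
        + (m + 1) * (a - b) ^ 2 * antidiagonalSum narayanaCoeff a b m
      = (2 * m + 5) * (a + b) * antidiagonalSum narayanaCoeff a b (m + 1) := by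
  have hA := mul_antidiagonalSum_left narayanaCoeff
    (narayanaCoeff_of_neg_left (by norm_num)) a b
  have hB := mul_antidiagonalSum_right narayanaCoeff
    (fun i ↦ narayanaCoeff_of_neg_right i (by norm_num)) a b
  have hAA := mul_antidiagonalSum_left (fun i j ↦ narayanaCoeff (i - 1) j)
    (narayanaCoeff_of_neg_left (by norm_num)) a b (m + 1)
  have hAB := mul_antidiagonalSum_left (fun i j ↦ narayanaCoeff i (j - 1))
    (fun _ ↦ narayanaCoeff_of_neg_left (by norm_num) _) a b (m + 1)
  have hBB := mul_antidiagonalSum_right (fun i j ↦ narayanaCoeff i (j - 1))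
    (fun i ↦ narayanaCoeff_of_neg_right i (by norm_num)) a b (m + 1)
  have expand : (m + 1) * (a - b) ^ 2 * antidiagonalSum narayanaCoeff a b m
      = (m + 1) * (a * (a * antidiagonalSum narayanaCoeff a b m)
        - 2 * (a * (b * antidiagonalSum narayanaCoeff a b m))
        + b * (b * antidiagonalSum narayanaCoeff a b m)) := by ring
  have expand' : (2 * m + 5) * (a + b) * antidiagonalSum narayanaCoeff a b (m + 1)
      = (2 * m + 5) * (a * antidiagonalSum narayanaCoeff a b (m + 1)
        + b * antidiagonalSum narayanaCoeff a b (m + 1)) := by ring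
  rw [expand, expand', hA, hB, hA, hB, hAA, hAB, hBB, ← sub_eq_zero]
  simp only [antidiagonalSum, mul_sum, ← sum_add_distrib, ← sum_sub_distrib]
  refine sum_eq_zero fun p hp ↦ ?_
  have key := congrArg (algebraMap ℚ R) (narayanaCoeff_recurrence p.1 p.2 m
    (by exact_mod_cast HasAntidiagonal.mem_antidiagonal.mp hp))
  simp only [map_add, map_sub, map_mul, map_natCast, map_ofNat, map_one] at key
  simp only [Algebra.smul_def, sub_sub, one_add_one_eq_two]
  linear_combination key * (a ^ p.1 * b ^ p.2)

noncomputable def narayanaPoly (a b : R) (n : ℕ) : R :=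
  ∑ i ∈ range n, narayana n (i + 1) • (a ^ i * b ^ (n - 1 - i))

lemma narayanaPoly_succ (a b : R) (k : ℕ) :
    narayanaPoly a b (k + 1) = antidiagonalSum narayanaCoeff a b k := by
  rw [narayanaPoly, antidiagonalSum, Nat.sum_antidiagonal_eq_sum_range_succ_mk]
  refine sum_congr rfl fun i hi ↦ ?_
  obtain ⟨j, rfl⟩ := Nat.exists_eq_add_of_le (Nat.lt_succ_iff.mp (mem_range.mp hi))
  rw [← narayana_eq_narayanaCoeff, Nat.add_sub_cancel_left, show i + j + 1 - 1 - i = j by omega]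

lemma narayanaPoly_recurrence (a b : R) (n : ℕ) :
    ((n : R) + 3) * narayanaPoly a b (n + 2) + n * (a - b) ^ 2 * narayanaPoly a b n
      = (2 * n + 3) * (a + b) * narayanaPoly a b (n + 1) := by
  cases n with
  | zero =>
    norm_num [narayanaPoly, narayana, sum_range_succ]
    ring
  | succ m =>
    rw [narayanaPoly_succ, narayanaPoly_succ, narayanaPoly_succ]
    push_cast
    linear_combination antidiagonalSum_narayanaCoeff_recurrence a b m

lemma eq_of_three_term_recurrence {p r : R} {u v : ℕ → R}
    (hu : ∀ n : ℕ, ((n : R) + 3) * u (n + 2) + n * r * u n = (2 * n + 3) * p * u (n + 1))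
    (hv : ∀ n : ℕ, ((n : R) + 3) * v (n + 2) + n * r * v n = (2 * n + 3) * p * v (n + 1))
    (h0 : u 0 = v 0) (h1 : u 1 = v 1) : u = v := by
  have step : ∀ n, u n = v n ∧ u (n + 1) = v (n + 1) := by
    intro n
    induction n with
    | zero => exact ⟨h0, h1⟩
    | succ n ih =>
      refine ⟨ih.2, ?_⟩
      have hunit : IsUnit (algebraMap ℚ R ((n : ℚ) + 3)) :=
        (show ((n : ℚ) + 3) ≠ 0 by positivity).isUnit.map _
      rw [map_add, map_natCast, map_ofNat] at hunit
      refine hunit.mul_left_cancel ?_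
      linear_combination hu n - hv n + (2 * n + 3) * p * ih.2 - n * r * ih.1
  funext n
  exact (step n).1

end NarayanaPolynomial

section QuadraticSeries

variable {R : Type*} [CommRing R]

lemma coeff_X_mul_derivative (f : R⟦X⟧) (n : ℕ) : coeff n (X * d⁄dX R f) = n * coeff n f := by
  cases n with
  | zero => simp
  | succ n => rw [coeff_succ_X_mul, coeff_derivative, mul_comm]; push_cast; rfl

variable {p q : R} {c : R⟦X⟧} (hc : C q * X * c ^ 2 + X = (1 - C p * X) * c)
include hc

lemma X_mul_derivative_of_quadratic :
    (1 - C (2 * p) * X + C (p ^ 2 - 4 * q) * X ^ 2) * (X * d⁄dX R c)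
      = 2 * X - (1 - C p * X) * c := by
  have hD := congrArg (d⁄dX R) hc
  simp only [Derivation.leibniz, map_add, map_sub, smul_eq_mul,
    Derivation.map_one_eq_zero, derivative_X, derivative_C, pow_two] at hD
  simp only [map_mul, map_sub, map_pow, map_ofNat]
  -- `w² = Δ` modulo `hc`, and `hD` says `w c' = q c² + p c + 1`
  set w := 1 - C p * X - 2 * C q * X * c
  linear_combination (w - 2 - 4 * C q * X ^ 2 * d⁄dX R c) * hc - X * w * hD

lemma coeff_zero_of_quadratic : coeff 0 c = 0 := by
  simpa using (congrArg constantCoeff hc).symm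

lemma coeff_one_of_quadratic : coeff 1 c = 1 := by
  have h0 : constantCoeff c = 0 := by
    rw [← coeff_zero_eq_constantCoeff_apply, coeff_zero_of_quadratic hc]
  have h := congrArg (coeff 1) hc
  rw [mul_assoc, sub_mul, one_mul, mul_assoc] at h
  simp only [map_add, map_sub, coeff_C_mul, coeff_succ_X_mul, coeff_one_X,
    coeff_zero_eq_constantCoeff_apply, map_pow, h0] at h
  linear_combination -h

lemma coeff_recurrence_of_quadratic (n : ℕ) :
    ((n : R) + 3) * coeff (n + 2) c + n * (p ^ 2 - 4 * q) * coeff n c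
      = (2 * n + 3) * p * coeff (n + 1) c := by
  have h := congrArg (coeff (n + 2)) (X_mul_derivative_of_quadratic hc)
  set E := X * d⁄dX R c with hE
  set r := p ^ 2 - 4 * q
  rw [show (1 - C (2 * p) * X + C r * X ^ 2) * E = E - C (2 * p) * (X * E) + C r * (X * (X * E))
      by ring, sub_mul, one_mul, mul_assoc] at h
  simp only [map_add, map_sub, coeff_C_mul, coeff_succ_X_mul] at h
  simp only [hE, coeff_X_mul_derivative] at h
  have h2X : coeff (n + 2) (2 * X : R⟦X⟧) = 0 := by simp [two_mul, coeff_X]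
  rw [h2X] at h
  push_cast at h
  linear_combination h

end QuadraticSeries

theorem catalan_series_narayana_general
    (a b : MvPolynomial (Fin 2) ℚ)
    (c : PowerSeries (MvPolynomial (Fin 2) ℚ))
    (hc : PowerSeries.C (a * b) * PowerSeries.X * c ^ 2 + PowerSeries.X =
      (1 - PowerSeries.C (a + b) * PowerSeries.X) * c) :
    ∀ n : ℕ, 1 ≤ n →
      PowerSeries.coeff n c =
        ∑ i ∈ Finset.range n, narayana n (i + 1) • (a ^ i * b ^ (n - 1 - i)) := by
  have hcoeff : (fun n ↦ coeff n c) = narayanaPoly a b := by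
    refine eq_of_three_term_recurrence (coeff_recurrence_of_quadratic hc) (fun n ↦ ?_) ?_ ?_
    · linear_combination narayanaPoly_recurrence a b n
    · simp [coeff_zero_of_quadratic hc, narayanaPoly]
    · simp [coeff_one_of_quadratic hc, narayanaPoly, narayana]
  intro n _
  exact congrFun hcoeff n

/-- The Catalan generating series `ca(a,b,t)`, characterized as the formal power
series solution of `ab·t·ca² − (1 − (a+b)t)·ca + t = 0`, has coefficients
`ca_n(a,b) = Σ_{i=0}^{n−1} T(n,i+1) aⁱ b^{n−1−i}` given by the Narayana triangle. -/
theorem catalan_series_narayana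
    (a b : MvPolynomial (Fin 2) ℚ) (ha : a = MvPolynomial.X 0)
    (hb : b = MvPolynomial.X 1)
    (c : PowerSeries (MvPolynomial (Fin 2) ℚ))
    (hc : PowerSeries.C (a * b) * PowerSeries.X * c ^ 2 + PowerSeries.X =
      (1 - PowerSeries.C (a + b) * PowerSeries.X) * c) :
    ∀ n : ℕ, 1 ≤ n →
      PowerSeries.coeff n c =
        ∑ i ∈ Finset.range n, narayana n (i + 1) • (a ^ i * b ^ (n - 1 - i)) :=
  catalan_series_narayana_general a b c hc
end

section
/- In the algebra Sym of noncommutative symmetric functions, the series Ψ_n defined by the Newton-type recurrence n·S_n = S_{n−1}Ψ₁ + S_{n−2}Ψ₂ + ⋯ + Ψ_n satisfies Ψ_n = Σ_{k=0}^{n−1} (−1)^k R_{(1^k, n−k)}, where R_I are the noncommutative ribbon Schur functions. -/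
open Finset

/-- Noncommutative symmetric functions: the free associative algebra on the
complete functions `S₁, S₂, …` (the generator of index `0` is unused). -/
abbrev NSym : Type := FreeAlgebra ℚ ℕ

/-- The complete noncommutative symmetric functions, with `S 0 = 1`. -/
noncomputable def Sgen (n : ℕ) : NSym := if n = 0 then 1 else FreeAlgebra.ι ℚ n

/-- `S^I = S_{i₁} ⋯ S_{i_r}` for a composition `I`. -/
noncomputable def SymProd (I : List ℕ) : NSym := (I.map Sgen).prod

/-- The composition of `n = ε.length + 1` with descent set the positions of
`false` in the sign sequence `ε`. -/
def comp : List Bool → List ℕ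
  | [] => [1]
  | true :: rest =>
      match comp rest with
      | [] => [1]
      | h :: t => (h + 1) :: t
  | false :: rest => 1 :: comp rest

/-- The ribbon `R_I` for the composition `I` encoded by the sign sequence
`ε : Fin m → Bool` (length `m`, so `I ⊨ m+1`), via Möbius inversion
`R_I = Σ_{J ≤ I} (−1)^{ℓ(I)−ℓ(J)} S^J`, compositions `J ≤ I` being encoded by
sign sequences `δ ≥ ε` (turning some `−` into `+`). -/
noncomputable def Rib {m : ℕ} (ε : Fin m → Bool) : NSym :=
  ∑ δ ∈ Finset.univ.filter (fun δ : Fin m → Bool => ∀ i, ε i = true → δ i = true),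
    ((-1 : ℚ) ^ ((List.ofFn ε).count false + (List.ofFn δ).count false)) •
      SymProd (comp (List.ofFn δ))

lemma Sgen_zero : Sgen 0 = 1 := rfl

lemma SymProd_append (X Y : List ℕ) : SymProd (X ++ Y) = SymProd X * SymProd Y := by
  simp [SymProd]

lemma comp_ne_nil (L : List Bool) : comp L ≠ [] := by
  induction L with
  | nil => simp [comp]
  | cons b t ih =>
    cases b <;> simp [comp]
    cases h : comp t with
    | nil => exact absurd h ih
    | cons a s => simp

lemma comp_append_false (A B : List Bool) :
    comp (A ++ false :: B) = comp A ++ comp B := by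
  induction A with
  | nil => simp [comp]
  | cons b t ih =>
    cases b
    · simp [comp, ih]
    · show (match comp (t ++ false :: B) with
        | [] => [1]
        | h :: t => (h + 1) :: t) = comp (true :: t) ++ comp B
      rw [ih]
      cases h : comp t with
      | nil => exact absurd h (comp_ne_nil t)
      | cons a s => simp [comp, h]

lemma comp_replicate_true (t : ℕ) : comp (List.replicate t true) = [t + 1] := by
  induction t with
  | zero => simp [comp]
  | succ n ih => simp [List.replicate_succ, comp, ih]

noncomputable def T : ℕ → NSym
  | 0 => 1
  | (n+1) => - ∑ k ∈ (Finset.range (n+1)).attach, T k.1 * Sgen (n+1 - k.1)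
  decreasing_by exact Finset.mem_range.mp k.2

noncomputable def T' : ℕ → NSym
  | 0 => 1
  | (n+1) => - ∑ k ∈ (Finset.range (n+1)).attach, Sgen (n+1 - k.1) * T' k.1
  decreasing_by exact Finset.mem_range.mp k.2

lemma T_zero : T 0 = 1 := by rw [T]

lemma T_succ (n : ℕ) : T (n+1) = - ∑ k ∈ Finset.range (n+1), T k * Sgen (n+1-k) := by
  rw [T, ← Finset.sum_attach (Finset.range (n+1)) (fun k => T k * Sgen (n+1-k))]

lemma T'_succ (n : ℕ) : T' (n+1) = - ∑ k ∈ Finset.range (n+1), Sgen (n+1-k) * T' k := by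
  rw [T', ← Finset.sum_attach (Finset.range (n+1)) (fun k => Sgen (n+1-k) * T' k)]

/-- τ·σ = 1 : right sums -/
lemma RT (n : ℕ) : ∑ k ∈ Finset.range (n+1), T k * Sgen (n - k)
    = if n = 0 then 1 else 0 := by
  cases n with
  | zero => simp [T, Sgen_zero]
  | succ m =>
    rw [Finset.sum_range_succ]
    simp only [Nat.sub_self, Sgen_zero, mul_one, T_succ]
    simp

lemma LT' (n : ℕ) : ∑ k ∈ Finset.range (n+1), Sgen (n - k) * T' k
    = if n = 0 then 1 else 0 := by
  cases n with
  | zero => simp [T', Sgen_zero]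
  | succ m =>
    rw [Finset.sum_range_succ]
    simp only [Nat.sub_self, Sgen_zero, one_mul, T'_succ]
    simp

lemma swapsum {M : Type*} [AddCommMonoid M] (n : ℕ) (F : ℕ → ℕ → M) :
    ∑ a ∈ range (n+1), ∑ c ∈ range (n+1-a), F a c
      = ∑ c ∈ range (n+1), ∑ a ∈ range (n+1-c), F a c := by
  rw [Finset.sum_sigma', Finset.sum_sigma']
  exact Finset.sum_nbij' (i := fun p => ⟨p.2, p.1⟩) (j := fun p => ⟨p.2, p.1⟩)
    (by simp; omega) (by simp; omega) (by simp) (by simp) (by simp)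

lemma T_eq_T' (n : ℕ) : T n = T' n := by
  have key : ∑ a ∈ range (n+1), ∑ c ∈ range (n+1-a), T a * Sgen (n-a-c) * T' c
      = ∑ c ∈ range (n+1), ∑ a ∈ range (n+1-c), T a * Sgen (n-a-c) * T' c :=
    swapsum n _
  have h1 : ∑ a ∈ range (n+1), ∑ c ∈ range (n+1-a), T a * Sgen (n-a-c) * T' c = T n := by
    have : ∀ a ∈ range (n+1), ∑ c ∈ range (n+1-a), T a * Sgen (n-a-c) * T' c
        = T a * (if n - a = 0 then 1 else 0) := by
      intro a ha
      simp only [mem_range] at ha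
      rw [← LT' (n-a), Finset.mul_sum]
      have hn : n + 1 - a = (n - a) + 1 := by omega
      rw [hn]
      exact Finset.sum_congr rfl (fun c _ => by rw [mul_assoc])
    rw [Finset.sum_congr rfl this]
    have : ∀ a ∈ range (n+1), T a * (if n - a = 0 then 1 else 0)
        = if a = n then T n else 0 := by
      intro a ha
      simp only [mem_range] at ha
      by_cases h : a = n
      · simp [h]
      · have hz : n - a ≠ 0 := by omega
        simp [h, hz]
    rw [Finset.sum_congr rfl this, Finset.sum_ite_eq' (range (n+1)) n]
    simp
  have h2 : ∑ c ∈ range (n+1), ∑ a ∈ range (n+1-c), T a * Sgen (n-a-c) * T' c = T' n := by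
    have : ∀ c ∈ range (n+1), ∑ a ∈ range (n+1-c), T a * Sgen (n-a-c) * T' c
        = (if n - c = 0 then 1 else 0) * T' c := by
      intro c hc
      simp only [mem_range] at hc
      rw [← RT (n-c), Finset.sum_mul]
      have hn : n + 1 - c = (n - c) + 1 := by omega
      rw [hn]
      refine Finset.sum_congr rfl (fun a _ => ?_)
      have : n - a - c = n - c - a := by omega
      rw [this]
    rw [Finset.sum_congr rfl this]
    have : ∀ c ∈ range (n+1), (if n - c = 0 then 1 else 0) * T' c
        = if c = n then T' n else 0 := by
      intro c hc
      simp only [mem_range] at hc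
      by_cases h : c = n
      · simp [h]
      · have hz : n - c ≠ 0 := by omega
        simp [h, hz]
    rw [Finset.sum_congr rfl this, Finset.sum_ite_eq' (range (n+1)) n]
    simp
  rw [← h1, key, h2]

/-- σ·τ = 1 : left sums for T -/
lemma STleft (n : ℕ) : ∑ k ∈ Finset.range (n+1), Sgen (n - k) * T k
    = if n = 0 then 1 else 0 := by
  rw [← LT' n]
  exact Finset.sum_congr rfl (fun k _ => by rw [T_eq_T'])

noncomputable def U (j t : ℕ) : NSym :=
  ∑ l : Fin j → Bool, ((-1:ℚ) ^ ((List.ofFn l).count false)) •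
    SymProd (comp (List.ofFn l ++ List.replicate t true))

lemma SymProd_singleton (a : ℕ) : SymProd [a] = Sgen a := by simp [SymProd]

lemma U_zero (t : ℕ) : U 0 t = Sgen (t+1) := by
  simp [U, comp_replicate_true, SymProd_singleton]

lemma ofFn_snoc' {n : ℕ} (l : Fin n → Bool) (b : Bool) :
    List.ofFn (Fin.snoc l b : Fin (n+1) → Bool) = List.ofFn l ++ [b] := by
  rw [List.ofFn_succ']
  simp [Fin.snoc, List.concat_eq_append]

lemma U_succ (j t : ℕ) : U (j+1) t = U j (t+1) - U j 0 * Sgen (t+1) := by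
  rw [U]
  rw [← (Fin.snocEquiv (fun _ : Fin (j+1) => Bool)).sum_comp
    (fun l => ((-1:ℚ) ^ ((List.ofFn l).count false) •
      SymProd (comp (List.ofFn l ++ List.replicate t true))))]
  rw [Fintype.sum_prod_type]
  rw [Fintype.sum_bool]
  have h1 : ∑ l : Fin j → Bool,
      ((-1:ℚ) ^ ((List.ofFn (Fin.snocEquiv (fun _ : Fin (j+1) => Bool) (true, l))).count false)) •
        SymProd (comp (List.ofFn (Fin.snocEquiv (fun _ : Fin (j+1) => Bool) (true, l)) ++ List.replicate t true))
      = U j (t+1) := by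
    rw [U]
    refine Finset.sum_congr rfl fun l _ => ?_
    have he : (Fin.snocEquiv (fun _ : Fin (j+1) => Bool)) (true, l) = Fin.snoc l true := rfl
    rw [he, ofFn_snoc']
    have harg : (List.ofFn l ++ [true]) ++ List.replicate t true
        = List.ofFn l ++ List.replicate (t+1) true := by
      rw [List.append_assoc, List.replicate_succ]
      rfl
    rw [harg]
    congr 1
    simp
  have h2 : ∑ l : Fin j → Bool,
      ((-1:ℚ) ^ ((List.ofFn (Fin.snocEquiv (fun _ : Fin (j+1) => Bool) (false, l))).count false)) •
        SymProd (comp (List.ofFn (Fin.snocEquiv (fun _ : Fin (j+1) => Bool) (false, l)) ++ List.replicate t true))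
      = - (U j 0 * Sgen (t+1)) := by
    rw [U, Finset.sum_mul, ← Finset.sum_neg_distrib]
    refine Finset.sum_congr rfl fun l _ => ?_
    have he : (Fin.snocEquiv (fun _ : Fin (j+1) => Bool)) (false, l) = Fin.snoc l false := rfl
    rw [he, ofFn_snoc']
    have harg : (List.ofFn l ++ [false]) ++ List.replicate t true
        = List.ofFn l ++ (false :: List.replicate t true) := by
      rw [List.append_assoc]; rfl
    rw [harg, comp_append_false, comp_replicate_true, SymProd_append, SymProd_singleton]
    have hc : (List.ofFn l ++ [false]).count false = (List.ofFn l).count false + 1 := by simp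
    rw [hc, pow_succ]
    have : List.ofFn l ++ List.replicate 0 true = List.ofFn l := by simp
    rw [this, smul_mul_assoc]
    rw [mul_neg_one, neg_smul]
  rw [h1, h2, sub_eq_add_neg]

lemma T_succ' (j : ℕ) : T (j+1) = - ∑ a ∈ Finset.range (j+1), T (j-a) * Sgen (a+1) := by
  rw [T_succ]
  congr 1
  rw [← Finset.sum_range_reflect (fun k => T k * Sgen (j+1-k)) (j+1)]
  refine Finset.sum_congr rfl fun a ha => ?_
  simp only [mem_range] at ha
  congr 2 <;> omega

lemma U_closed (j : ℕ) : ∀ t, U j t = ∑ a ∈ Finset.range (j+1), T (j-a) * Sgen (a+t+1) := by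
  induction j with
  | zero => intro t; simp [U_zero, T_zero]
  | succ j ih =>
    intro t
    rw [U_succ, ih, ih, Finset.sum_range_succ' (fun a => T (j+1-a) * Sgen (a+t+1)) (j+1)]
    have e1 : ∑ a ∈ Finset.range (j+1), T (j-a) * Sgen (a+(t+1)+1)
        = ∑ a ∈ Finset.range (j+1), T (j+1-(a+1)) * Sgen ((a+1)+t+1) :=
      Finset.sum_congr rfl fun a ha => by
        simp only [mem_range] at ha; congr 2 <;> omega
    have e2 : (∑ a ∈ Finset.range (j+1), T (j-a) * Sgen (a+0+1)) * Sgen (t+1)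
        = - (T (j+1-0) * Sgen (0+t+1)) := by
      have h3 : ∑ a ∈ Finset.range (j+1), T (j-a) * Sgen (a+0+1)
          = ∑ a ∈ Finset.range (j+1), T (j-a) * Sgen (a+1) := by
        refine Finset.sum_congr rfl fun a _ => by norm_num
      rw [h3, show j+1-0 = j+1 from rfl, T_succ' j, show (0:ℕ)+t+1 = t+1 by omega,
        neg_mul, neg_neg, Finset.sum_mul]
    rw [e1, e2, sub_neg_eq_add]

lemma ofFn_split {m j : ℕ} (h : j ≤ m) (δ : Fin m → Bool)
    (hδ : ∀ i : Fin m, j ≤ (i:ℕ) → δ i = true) :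
    List.ofFn δ = List.ofFn (fun i : Fin j => δ (Fin.castLE h i)) ++ List.replicate (m - j) true := by
  refine List.ext_getElem (by simp; omega) fun i hi1 hi2 => ?_
  simp only [List.getElem_ofFn]
  by_cases hij : i < j
  · rw [List.getElem_append_left (by simpa using hij)]
    simp [Fin.castLE]
  · rw [List.getElem_append_right (by simpa using hij)]
    simp only [List.getElem_replicate]
    rw [hδ _ (by simpa using not_lt.mp hij)]

lemma rib_eq_U {m : ℕ} (j : ℕ) (h : j ≤ m) :
    Rib (fun i : Fin m => decide (j ≤ (i:ℕ))) = ((-1:ℚ)^j) • U j (m - j) := by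
  have hcount : (List.ofFn (fun i : Fin m => decide (j ≤ (i:ℕ)))).count false = j := by
    rw [ofFn_split h _ (fun i hi => by simpa using hi)]
    have : (fun i : Fin j => decide (j ≤ ((Fin.castLE h i : Fin m) : ℕ))) = fun _ => false := by
      funext i
      simp only [Fin.coe_castLE]
      simpa using i.isLt
    rw [this]
    simp [List.count_replicate]
  rw [Rib, U, Finset.smul_sum]
  refine Finset.sum_nbij'
    (i := fun δ => fun i : Fin j => δ (Fin.castLE h i))
    (j := fun l => fun i : Fin m => if h' : (i:ℕ) < j then l ⟨i, h'⟩ else true)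
    ?_ ?_ ?_ ?_ ?_
  · intro δ _; exact Finset.mem_univ _
  · intro l _
    simp only [Finset.mem_filter, Finset.mem_univ, true_and]
    intro i hi
    simp only [decide_eq_true_eq] at hi
    rw [dif_neg (by omega)]
  · intro δ hδ
    simp only [Finset.mem_filter, Finset.mem_univ, true_and] at hδ
    funext i
    by_cases h' : (i:ℕ) < j
    · simp only [dif_pos h']
      congr 1
    · simp only [dif_neg h']
      exact (hδ i (by simpa using not_lt.mp h')).symm
  · intro l _
    funext i
    have hi : ((Fin.castLE h i : Fin m) : ℕ) < j := by simpa using i.isLt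
    simp only [dif_pos hi]
    congr 1
  · intro δ hδ
    simp only [Finset.mem_filter, Finset.mem_univ, true_and] at hδ
    have hsplit : List.ofFn δ
        = List.ofFn (fun i : Fin j => δ (Fin.castLE h i)) ++ List.replicate (m - j) true :=
      ofFn_split h δ (fun i hi => hδ i (by simpa using hi))
    rw [hcount, hsplit]
    rw [smul_smul, ← pow_add]
    congr 2
    simp [List.count_append, List.count_replicate]

lemma triangle_sum {M : Type*} [AddCommMonoid M] (n : ℕ) (g : ℕ → M) :
    ∑ j ∈ range n, ∑ b ∈ range (j+1), g b = ∑ b ∈ range n, (n - b) • g b := by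
  induction n with
  | zero => simp
  | succ n ih =>
    rw [Finset.sum_range_succ, ih, Finset.sum_range_succ, Finset.sum_range_succ]
    have h1 : ∀ b ∈ range n, (n + 1 - b) • g b = (n - b) • g b + g b := by
      intro b hb
      simp only [mem_range] at hb
      rw [show n + 1 - b = (n - b) + 1 by omega, succ_nsmul]
    rw [Finset.sum_congr rfl h1, Finset.sum_add_distrib]
    simp [add_assoc, add_comm, add_left_comm]

lemma newton_hook (n : ℕ) (hn : 1 ≤ n) :
    ∑ k ∈ Finset.Icc 1 n, Sgen (n - k) *
      (∑ b ∈ range k, (k - b) • (T b * Sgen (k - b))) = (n : ℚ) • Sgen n := by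
  have lhs_eq : ∑ k ∈ Finset.Icc 1 n, Sgen (n - k) *
      (∑ b ∈ range k, (k - b) • (T b * Sgen (k - b)))
      = ∑ k ∈ Finset.Icc 1 n, ∑ b ∈ range k,
          (k - b) • (Sgen (n - k) * (T b * Sgen (k - b))) := by
    refine Finset.sum_congr rfl fun k _ => ?_
    rw [Finset.mul_sum]
    exact Finset.sum_congr rfl fun b _ => (mul_smul_comm _ _ _)
  rw [lhs_eq]
  have swap : ∑ k ∈ Finset.Icc 1 n, ∑ b ∈ range k,
        (k - b) • (Sgen (n - k) * (T b * Sgen (k - b)))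
      = ∑ m ∈ Finset.Icc 1 n, ∑ b ∈ range (n - m + 1),
        m • (Sgen (n - m - b) * (T b * Sgen m)) := by
    rw [Finset.sum_sigma', Finset.sum_sigma']
    refine Finset.sum_nbij' (i := fun p => ⟨p.1 - p.2, p.2⟩) (j := fun p => ⟨p.1 + p.2, p.2⟩)
      ?_ ?_ ?_ ?_ ?_
    · intro p hp
      simp only [Finset.mem_sigma, Finset.mem_Icc, Finset.mem_range] at hp ⊢
      omega
    · intro p hp
      simp only [Finset.mem_sigma, Finset.mem_Icc, Finset.mem_range] at hp ⊢
      omega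
    · intro p hp
      simp only [Finset.mem_sigma, Finset.mem_Icc, Finset.mem_range] at hp
      have : p.1 - p.2 + p.2 = p.1 := by omega
      exact Sigma.ext this (by simp)
    · intro p hp
      simp only [Finset.mem_sigma, Finset.mem_Icc, Finset.mem_range] at hp
      have : p.1 + p.2 - p.2 = p.1 := by omega
      exact Sigma.ext this (by simp)
    · intro p hp
      simp only [Finset.mem_sigma, Finset.mem_Icc, Finset.mem_range] at hp
      have h1 : n - p.1 = n - (p.1 - p.2) - p.2 := by omega
      rw [h1]
  rw [swap]
  have inner : ∀ m ∈ Finset.Icc 1 n, ∑ b ∈ range (n - m + 1),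
      m • (Sgen (n - m - b) * (T b * Sgen m))
      = m • ((if n - m = 0 then (1:NSym) else 0) * Sgen m) := by
    intro m hm
    rw [← STleft (n - m), Finset.sum_mul, Finset.smul_sum]
    exact Finset.sum_congr rfl fun b _ => by rw [mul_assoc]
  rw [Finset.sum_congr rfl inner]
  have final : ∀ m ∈ Finset.Icc 1 n, m • ((if n - m = 0 then (1:NSym) else 0) * Sgen m)
      = if m = n then n • Sgen n else 0 := by
    intro m hm
    simp only [Finset.mem_Icc] at hm
    by_cases h : m = n
    · subst h; simp
    · have : n - m ≠ 0 := by omega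
      simp [h, this]
  rw [Finset.sum_congr rfl final, Finset.sum_ite_eq' (Finset.Icc 1 n) n]
  simp only [Finset.mem_Icc, hn, le_refl, and_self, if_true]
  rw [Nat.cast_smul_eq_nsmul]

lemma hook_closed (n : ℕ) (hn : 1 ≤ n) :
    ∑ k ∈ range n, ((-1:ℚ)^k) • Rib (fun i : Fin (n-1) => decide (k ≤ (i:ℕ)))
    = ∑ b ∈ range n, (n - b) • (T b * Sgen (n - b)) := by
  have step : ∀ j ∈ range n, ((-1:ℚ)^j) • Rib (fun i : Fin (n-1) => decide (j ≤ (i:ℕ)))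
      = ∑ b ∈ range (j+1), T b * Sgen (n - b) := by
    intro j hj
    simp only [mem_range] at hj
    have hjm : j ≤ n - 1 := by omega
    rw [rib_eq_U j hjm, smul_smul, ← pow_add, Even.neg_one_pow ⟨j, by omega⟩, one_smul,
      U_closed]
    have congr1 : ∀ a ∈ range (j+1), T (j-a) * Sgen (a+(n-1-j)+1)
        = (fun b => T b * Sgen (n - b)) (j+1-1-a) := by
      intro a ha
      simp only [mem_range] at ha
      have e1 : j + 1 - 1 - a = j - a := by omega
      have e2 : a + (n-1-j) + 1 = n - (j - a) := by omega
      rw [e1, e2]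
    rw [Finset.sum_congr rfl congr1,
      Finset.sum_range_reflect (fun b => T b * Sgen (n - b)) (j+1)]
  rw [Finset.sum_congr rfl step, triangle_sum]

/-- The noncommutative power sums `Ψ_n` of the first kind, defined by the Newton
recurrence `n S_n = S_{n−1}Ψ₁ + ⋯ + Ψ_n`, are the alternating hook ribbon sums
`Ψ_n = Σ_{k=0}^{n−1} (−1)^k R_{(1^k, n−k)}`. -/
theorem psi_hook_ribbon (Ψ : ℕ → NSym)
    (hΨ : ∀ n : ℕ, 1 ≤ n →
      (n : ℚ) • Sgen n = ∑ k ∈ Finset.Icc 1 n, Sgen (n - k) * Ψ k) :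
    ∀ n : ℕ, 1 ≤ n →
      Ψ n = ∑ k ∈ Finset.range n,
        ((-1 : ℚ) ^ k) • Rib (fun i : Fin (n - 1) => decide (k ≤ (i : ℕ))) := by
  have main : ∀ n : ℕ, 1 ≤ n → Ψ n = ∑ b ∈ range n, (n - b) • (T b * Sgen (n - b)) := by
    intro n
    induction n using Nat.strong_induction_on with
    | _ n ih =>
      intro hn
      have hrec : ∑ k ∈ Finset.Icc 1 n, Sgen (n - k) * Ψ k
          = ∑ k ∈ Finset.Icc 1 n, Sgen (n - k) *
              (∑ b ∈ range k, (k - b) • (T b * Sgen (k - b))) := by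
        rw [(hΨ n hn).symm, newton_hook n hn]
      obtain ⟨m, rfl⟩ : ∃ m, n = m + 1 := ⟨n - 1, by omega⟩
      rw [Finset.sum_Icc_succ_top (by omega), Finset.sum_Icc_succ_top (by omega)] at hrec
      have hsame : ∑ k ∈ Finset.Icc 1 m, Sgen (m + 1 - k) * Ψ k
          = ∑ k ∈ Finset.Icc 1 m, Sgen (m + 1 - k) *
              (∑ b ∈ range k, (k - b) • (T b * Sgen (k - b))) := by
        refine Finset.sum_congr rfl fun k hk => ?_
        simp only [Finset.mem_Icc] at hk
        rw [ih k (by omega) hk.1]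
      rw [hsame, Nat.sub_self, Sgen_zero, one_mul, one_mul] at hrec
      exact add_left_cancel hrec
  intro n hn
  rw [main n hn, hook_closed n hn]
end

section
/- The quasi-shuffle product on K⟨Σ⟩ (words over a commutative additive semigroup Σ), defined by au ⊞ bv = a(u ⊞ bv) + b(au ⊞ v) + (a+b)(u ⊞ v) with the empty word as unit, is commutative and associative. -/
/-- The quasi-shuffle product on words over a commutative additive semigroup `σ`:
`au ⊞ bv = a(u ⊞ bv) + b(au ⊞ v) + (a+b)(u ⊞ v)`, empty word neutral. -/
noncomputable def qsh {σ : Type*} [AddCommSemigroup σ] :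
    List σ → List σ → (List σ →₀ ℤ)
  | [], y => Finsupp.single y 1
  | x :: u, [] => Finsupp.single (x :: u) 1
  | a :: u, b :: v =>
      (qsh u (b :: v)).mapDomain (a :: ·) +
      (qsh (a :: u) v).mapDomain (b :: ·) +
      (qsh u v).mapDomain ((a + b) :: ·)
termination_by x y => x.length + y.length
decreasing_by all_goals (simp [List.length_cons]; try omega)

/-!
Both identities follow by induction on the total length of the words. For associativity the
recursion is extended bilinearly, as
`lcons a f ⧢ lcons b g = lcons a (f ⧢ lcons b g) + lcons b (lcons a f ⧢ g) + lcons (a + b) (f ⧢ g)`.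
Expanding `(lcons a f ⧢ lcons b g) ⧢ lcons c h` and `lcons a f ⧢ (lcons b g ⧢ lcons c h)` twice
by this rule gives seven terms on each side, headed by the letters `a`, `b`, `c`, `a + b`, `a + c`,
`b + c`, `a + b + c`, and terms with the same head agree by induction.
-/

section QuasiShuffle

variable {σ : Type*}

noncomputable def lcons (a : σ) : (List σ →₀ ℤ) →ₗ[ℤ] (List σ →₀ ℤ) :=
  Finsupp.lmapDomain ℤ ℤ (a :: ·)

lemma lcons_single (a : σ) (u : List σ) (c : ℤ) :
    lcons a (Finsupp.single u c) = Finsupp.single (a :: u) c := by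
  simp [lcons, Finsupp.mapDomain_single]

variable [AddCommSemigroup σ]

lemma qsh_nil_left (v : List σ) : qsh [] v = Finsupp.single v 1 := by
  rw [qsh]

lemma qsh_nil_right (u : List σ) : qsh u [] = Finsupp.single u 1 := by
  cases u <;> rw [qsh]

lemma qsh_cons_cons (a b : σ) (u v : List σ) :
    qsh (a :: u) (b :: v) =
      lcons a (qsh u (b :: v)) + lcons b (qsh (a :: u) v) + lcons (a + b) (qsh u v) := by
  rw [qsh]; rfl

theorem qsh_comm : ∀ u v : List σ, qsh u v = qsh v u
  | [], v => by rw [qsh_nil_left, qsh_nil_right]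
  | a :: u, [] => by rw [qsh_nil_left, qsh_nil_right]
  | a :: u, b :: v => by
      rw [qsh_cons_cons, qsh_cons_cons, qsh_comm u (b :: v), qsh_comm (a :: u) v,
        qsh_comm u v, add_comm a b]
      abel
termination_by u v => u.length + v.length

noncomputable def qshMul : (List σ →₀ ℤ) →ₗ[ℤ] (List σ →₀ ℤ) →ₗ[ℤ] (List σ →₀ ℤ) :=
  Finsupp.linearCombination ℤ fun u => Finsupp.linearCombination ℤ (qsh u)

local infixl:70 " ⧢ " => qshMul

lemma qshMul_single_left (u : List σ) (g : List σ →₀ ℤ) :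
    Finsupp.single u 1 ⧢ g = g.sum fun v c => c • qsh u v := by
  rw [qshMul, Finsupp.linearCombination_single, one_smul, Finsupp.linearCombination_apply]

lemma qshMul_single_right (f : List σ →₀ ℤ) (w : List σ) :
    f ⧢ Finsupp.single w 1 = f.sum fun v c => c • qsh v w := by
  simp [qshMul, Finsupp.linearCombination_apply, LinearMap.finsupp_sum_apply]

lemma qshMul_single_single (u v : List σ) :
    Finsupp.single u 1 ⧢ Finsupp.single v 1 = qsh u v := by
  simp [qshMul_single_left]

lemma single_nil_qshMul (g : List σ →₀ ℤ) : Finsupp.single [] 1 ⧢ g = g := by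
  simp [qshMul_single_left, qsh_nil_left]

lemma qshMul_single_nil (f : List σ →₀ ℤ) : f ⧢ Finsupp.single [] 1 = f := by
  simp [qshMul_single_right, qsh_nil_right]

lemma lcons_qshMul_lcons (a b : σ) (f g : List σ →₀ ℤ) :
    lcons a f ⧢ lcons b g = lcons a (f ⧢ lcons b g) + lcons b (lcons a f ⧢ g) +
      lcons (a + b) (f ⧢ g) := by
  induction f using Finsupp.induction_linear with
  | zero => simp
  | add f₁ f₂ h₁ h₂ =>
      simp only [map_add, LinearMap.add_apply, h₁, h₂]
      abel
  | single u c =>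
      induction g using Finsupp.induction_linear with
      | zero => simp
      | add g₁ g₂ h₁ h₂ =>
          simp only [map_add, h₁, h₂]
          abel
      | single v d =>
          simp only [lcons_single, qshMul, Finsupp.linearCombination_single, LinearMap.smul_apply,
            qsh_cons_cons, map_smul, smul_add]

lemma qshMul_qshMul_lcons (a b c : σ) (f g h : List σ →₀ ℤ) :
    (lcons a f ⧢ lcons b g) ⧢ lcons c h =
      lcons a ((f ⧢ lcons b g) ⧢ lcons c h) + lcons b ((lcons a f ⧢ g) ⧢ lcons c h) +
      lcons c ((lcons a f ⧢ lcons b g) ⧢ h) + lcons (a + b) ((f ⧢ g) ⧢ lcons c h) +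
      lcons (a + c) ((f ⧢ lcons b g) ⧢ h) + lcons (b + c) ((lcons a f ⧢ g) ⧢ h) +
      lcons (a + b + c) ((f ⧢ g) ⧢ h) := by
  rw [lcons_qshMul_lcons a b f g]
  simp only [map_add, LinearMap.add_apply, lcons_qshMul_lcons]
  abel

lemma lcons_qshMul_qshMul (a b c : σ) (f g h : List σ →₀ ℤ) :
    lcons a f ⧢ (lcons b g ⧢ lcons c h) =
      lcons a (f ⧢ (lcons b g ⧢ lcons c h)) + lcons b (lcons a f ⧢ (g ⧢ lcons c h)) +
      lcons c (lcons a f ⧢ (lcons b g ⧢ h)) + lcons (a + b) (f ⧢ (g ⧢ lcons c h)) +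
      lcons (a + c) (f ⧢ (lcons b g ⧢ h)) + lcons (b + c) (lcons a f ⧢ (g ⧢ h)) +
      lcons (a + b + c) (f ⧢ (g ⧢ h)) := by
  rw [lcons_qshMul_lcons b c g h]
  simp only [map_add, lcons_qshMul_lcons, add_assoc a b c]
  abel

theorem qshMul_assoc_single : ∀ u v w : List σ,
    (Finsupp.single u 1 ⧢ Finsupp.single v 1) ⧢ Finsupp.single w 1 =
      Finsupp.single u 1 ⧢ (Finsupp.single v 1 ⧢ Finsupp.single w 1)
  | [], v, w => by simp only [single_nil_qshMul]
  | a :: u, [], w => by rw [qshMul_single_nil, single_nil_qshMul]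
  | a :: u, b :: v, [] => by rw [qshMul_single_nil, qshMul_single_nil]
  | a :: u, b :: v, c :: w => by
      have ih₁ := qshMul_assoc_single u (b :: v) (c :: w)
      have ih₂ := qshMul_assoc_single (a :: u) v (c :: w)
      have ih₃ := qshMul_assoc_single (a :: u) (b :: v) w
      have ih₄ := qshMul_assoc_single u v (c :: w)
      have ih₅ := qshMul_assoc_single u (b :: v) w
      have ih₆ := qshMul_assoc_single (a :: u) v w
      have ih₇ := qshMul_assoc_single u v w
      simp only [← lcons_single] at ih₁ ih₂ ih₃ ih₄ ih₅ ih₆ ⊢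
      rw [qshMul_qshMul_lcons, lcons_qshMul_qshMul, ih₁, ih₂, ih₃, ih₄, ih₅, ih₆, ih₇]
termination_by u v w => u.length + v.length + w.length
decreasing_by all_goals (simp only [List.length_cons]; omega)

end QuasiShuffle

/-- The quasi-shuffle product is commutative and associative (associativity stated
via its bilinear extension to formal combinations of words). -/
theorem qsh_comm_assoc {σ : Type*} [AddCommSemigroup σ] :
    (∀ u v : List σ, qsh u v = qsh v u) ∧
    (∀ u v w : List σ,
      ((qsh u v).sum fun x c => c • qsh x w) =
        ((qsh v w).sum fun x c => c • qsh u x)) := by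
  refine ⟨qsh_comm, fun u v w => ?_⟩
  have h := qshMul_assoc_single u v w
  rwa [qshMul_single_single, qshMul_single_single, qshMul_single_right, qshMul_single_left] at h
end

section
/- Define g₁(x) = 2a·σ₊(x)e^{−x} for x ≥ 0 (and 0 for x < 0), and recursively g_{n+1}(x) = σ₊(x)·(g_n * f)(x) where f(x) = 2(a σ₊(x) + b σ₋(x))e^{−|x|} and * is convolution on ℝ. Then for each n ≥ 1 there is a polynomial P_n(a,b,x), of degree n−1 in x and homogeneous of degree n in a,b, with g_n(x) = P_n(a,b,x)σ₊(x)e^{−x}, and the polynomials satisfy the integral recursion P_{n+1}(x) = 2(∫₀^x a P_n(y) dy + e^{2x} ∫_x^∞ b P_n(y) e^{−2y} dy) with P₁ = 2a. -/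
/-!
For a polynomial `p` in `x`, both terms of the recursion are again polynomials: `∫₀ˣ p` is, and
repeated integration by parts gives `e^{2x} ∫ₓ^∞ p(y) e^{-2y} dy = ∑ₖ p⁽ᵏ⁾(x) / 2^{k+1}`, a finite
sum. So `P_{n+1} = 2a ∫₀ˣ P_n + 2b ∑ₖ ∂ₓᵏ P_n / 2^{k+1}` defines the polynomials. Neither operator
changes the degree in `(a, b)`; only the antiderivative raises the degree in `x`, and it does so
on the term `a^n x^{n-1}`, which the `b`-term cannot cancel. Splitting the convolution integral at
`0` and at `x`, where `σ₊` and the kernel change form, gives `g_{n+1}(x) = σ₊(x) e^{-x} P_{n+1}(x)`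
by induction.
-/

open MvPolynomial Real Filter Set MeasureTheory
open scoped Topology

namespace Polynomial

lemma tendsto_eval_mul_exp_neg_mul (q : ℝ[X]) {c : ℝ} (hc : 0 < c) :
    Tendsto (fun y => q.eval y * exp (-c * y)) atTop (𝓝 0) := by
  have h := (q.comp (C c⁻¹ * X)).tendsto_div_exp_atTop.comp
    (tendsto_id.const_mul_atTop hc)
  refine h.congr fun y => ?_
  simp [exp_neg, inv_mul_cancel_left₀ hc.ne', div_eq_mul_inv]

lemma integrableOn_eval_mul_exp_neg_mul (q : ℝ[X]) {c : ℝ} (hc : 0 < c) (x : ℝ) :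
    IntegrableOn (fun y => q.eval y * exp (-c * y)) (Ioi x) := by
  refine integrable_of_isBigO_exp_neg (half_pos hc) (by fun_prop) ?_
  have hsplit : (fun y => q.eval y * exp (-c * y))
      = fun y => q.eval y * exp (-(c / 2) * y) * exp (-(c / 2) * y) := by
    ext y
    rw [mul_assoc, ← exp_add]
    ring_nf
  rw [hsplit]
  simpa using ((q.tendsto_eval_mul_exp_neg_mul (half_pos hc)).isBigO_one ℝ).mul
    (Asymptotics.isBigO_refl (fun y => exp (-(c / 2) * y)) atTop)

lemma integral_Ioi_eval_mul_exp_neg_mul (q : ℝ[X]) {c : ℝ} (hc : 0 < c) {N : ℕ}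
    (hN : derivative^[N] q = 0) (x : ℝ) :
    ∫ y in Ioi x, q.eval y * exp (-c * y) =
      exp (-c * x) * ∑ k ∈ Finset.range N, (derivative^[k] q).eval x / c ^ (k + 1) := by
  set T : ℝ → ℝ := fun y => ∑ k ∈ Finset.range N, (derivative^[k] q).eval y / c ^ (k + 1)
  have hT : ∀ y, c * T y - ∑ k ∈ Finset.range N, (derivative^[k + 1] q).eval y / c ^ (k + 1)
      = q.eval y := by
    intro y
    have := Finset.sum_range_sub' (fun k => (derivative^[k] q).eval y / c ^ k) N
    simp only [hN, eval_zero, zero_div, sub_zero, pow_zero, div_one,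
      Function.iterate_zero_apply] at this
    rw [← this, Finset.mul_sum, ← Finset.sum_sub_distrib]
    refine Finset.sum_congr rfl fun k _ => ?_
    field_simp
    ring
  have hderiv : ∀ y ∈ Ici x, HasDerivAt (fun y => -(T y * exp (-c * y)))
      (q.eval y * exp (-c * y)) y := by
    intro y _
    have hTd : HasDerivAt T
        (∑ k ∈ Finset.range N, (derivative^[k + 1] q).eval y / c ^ (k + 1)) y := by
      refine HasDerivAt.fun_sum fun k _ => ?_
      rw [Function.iterate_succ_apply']
      exact ((derivative^[k] q).hasDerivAt y).div_const _
    have hexp : HasDerivAt (fun y => exp (-c * y)) (exp (-c * y) * -c) y := by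
      simpa using ((hasDerivAt_id y).const_mul (-c)).exp
    refine (hTd.mul hexp).neg.congr_deriv ?_
    rw [← hT y]
    ring
  have hlim : Tendsto (fun y => -(T y * exp (-c * y))) atTop (𝓝 0) := by
    have := tendsto_finsetSum (Finset.range N) fun k _ =>
      ((derivative^[k] q).tendsto_eval_mul_exp_neg_mul hc).div_const (c ^ (k + 1))
    simpa [T, Finset.sum_mul, div_mul_eq_mul_div] using this.neg
  rw [integral_Ioi_of_hasDerivAt_of_tendsto' hderiv (q.integrableOn_eval_mul_exp_neg_mul hc x)
    hlim]
  ring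

end Polynomial

namespace MvPolynomial

section PDeriv

variable {R σ : Type*} [CommSemiring R] {i : σ}

lemma add_single_mem_support_of_mem_support_pderiv {p : MvPolynomial σ R} {m : σ →₀ ℕ}
    (hm : m ∈ (pderiv i p).support) : m + Finsupp.single i 1 ∈ p.support := by
  rw [mem_support_iff, coeff_pderiv] at hm
  exact mem_support_iff.mpr (left_ne_zero_of_mul hm)

lemma add_le_degreeOf_of_mem_support_iterate_pderiv {p : MvPolynomial σ R} {k : ℕ}
    {m : σ →₀ ℕ} (hm : m ∈ ((pderiv i)^[k] p).support) : m i + k ≤ degreeOf i p := by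
  induction k generalizing m with
  | zero => simpa using monomial_le_degreeOf i hm
  | succ k ih =>
    rw [Function.iterate_succ_apply'] at hm
    have := ih (add_single_mem_support_of_mem_support_pderiv hm)
    simp only [Finsupp.add_apply, Finsupp.single_eq_same] at this
    omega

lemma degreeOf_iterate_pderiv_le (p : MvPolynomial σ R) (k : ℕ) :
    degreeOf i ((pderiv i)^[k] p) ≤ degreeOf i p :=
  degreeOf_le_iff.mpr fun _ hm => by
    have := add_le_degreeOf_of_mem_support_iterate_pderiv hm
    omega

lemma iterate_pderiv_eq_zero {p : MvPolynomial σ R} {k : ℕ} (hk : degreeOf i p < k) :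
    (pderiv i)^[k] p = 0 := by
  rw [← support_eq_empty]
  exact Finset.eq_empty_of_forall_notMem fun _ hm => by
    have := add_le_degreeOf_of_mem_support_iterate_pderiv hm
    omega

lemma IsWeightedHomogeneous.iterate_pderiv {w : σ → ℕ} {p : MvPolynomial σ R} {n : ℕ}
    (hp : IsWeightedHomogeneous w p n) (hw : w i = 0) (k : ℕ) :
    IsWeightedHomogeneous w ((pderiv i)^[k] p) n := by
  induction k with
  | zero => exact hp
  | succ k ih => simpa only [Function.iterate_succ_apply'] using ih.pderiv (by simp [hw])

end PDeriv

variable {K σ : Type*} [Field K] {i : σ}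

noncomputable def antideriv (i : σ) (p : MvPolynomial σ K) : MvPolynomial σ K :=
  (∑ m ∈ p.support, monomial m (coeff m p / (m i + 1))) * X i

lemma coeff_antideriv_add_single (p : MvPolynomial σ K) (m : σ →₀ ℕ) :
    coeff (m + Finsupp.single i 1) (antideriv i p) = coeff m p / (m i + 1) := by
  classical
  rw [antideriv, coeff_mul_X, coeff_sum]
  simp only [coeff_monomial, Finset.sum_ite_eq', mem_support_iff]
  split_ifs with h
  · rfl
  · simp [not_not.mp h]

lemma pderiv_antideriv [CharZero K] (p : MvPolynomial σ K) : pderiv i (antideriv i p) = p := by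
  ext m
  rw [coeff_pderiv, coeff_antideriv_add_single]
  exact div_mul_cancel₀ _ (Nat.cast_add_one_ne_zero (m i))

lemma eval_antideriv {x : σ → K} (hx : x i = 0) (p : MvPolynomial σ K) :
    eval x (antideriv i p) = 0 := by
  simp [antideriv, hx]

lemma degreeOf_antideriv_le (p : MvPolynomial σ K) :
    degreeOf i (antideriv i p) ≤ degreeOf i p + 1 := by
  classical
  refine (degreeOf_mul_le _ _ _).trans (add_le_add ?_ (by rw [degreeOf_X]; split_ifs <;> simp))
  refine (degreeOf_sum_le _ _ _).trans (Finset.sup_le fun m hm => ?_)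
  exact (degreeOf_le_iff.mpr fun m' hm' => by
    rw [support_monomial] at hm'
    split_ifs at hm' <;> simp_all [monomial_le_degreeOf i hm])

lemma IsWeightedHomogeneous.antideriv {w : σ → ℕ} {p : MvPolynomial σ K} {n : ℕ}
    (hp : IsWeightedHomogeneous w p n) (hw : w i = 0) :
    IsWeightedHomogeneous w (antideriv i p) n := by
  rw [MvPolynomial.antideriv]
  have hsum : IsWeightedHomogeneous w (∑ m ∈ p.support, monomial m (coeff m p / (m i + 1))) n :=
    IsWeightedHomogeneous.sum _ _ _ fun m hm =>
      isWeightedHomogeneous_monomial _ _ _ (hp (mem_support_iff.mp hm))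
  simpa [hw] using hsum.mul (isWeightedHomogeneous_X K w i)

/-- For `p` a polynomial in `x = X i`, `expTail i c p = e^{c x} ∫ₓ^∞ p(y) e^{-c y} dy`
(repeated integration by parts; the sum stops once the derivatives vanish). -/
noncomputable def expTail (i : σ) (c : K) (p : MvPolynomial σ K) : MvPolynomial σ K :=
  ∑ k ∈ Finset.range (degreeOf i p + 1), C (c ^ (k + 1))⁻¹ * (pderiv i)^[k] p

lemma degreeOf_expTail_le (c : K) (p : MvPolynomial σ K) :
    degreeOf i (expTail i c p) ≤ degreeOf i p :=
  (degreeOf_sum_le _ _ _).trans <| Finset.sup_le fun k _ =>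
    (degreeOf_C_mul_le _ _ _).trans (degreeOf_iterate_pderiv_le p k)

lemma IsWeightedHomogeneous.expTail {w : σ → ℕ} {p : MvPolynomial σ K} {n : ℕ}
    (hp : IsWeightedHomogeneous w p n) (hw : w i = 0) (c : K) :
    IsWeightedHomogeneous w (expTail i c p) n :=
  IsWeightedHomogeneous.sum _ _ _ fun k _ => by
    simpa using (isWeightedHomogeneous_C w _).mul (hp.iterate_pderiv hw k)

end MvPolynomial

noncomputable def polyInX (a b : ℝ) : MvPolynomial (Fin 3) ℝ →ₐ[ℝ] Polynomial ℝ :=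
  aeval ![Polynomial.C a, Polynomial.C b, Polynomial.X]

lemma eval_polyInX (a b y : ℝ) (p : MvPolynomial (Fin 3) ℝ) :
    (polyInX a b p).eval y = eval ![a, b, y] p := by
  induction p using MvPolynomial.induction_on with
  | C r => simp [polyInX]
  | add p q hp hq => simp [hp, hq]
  | mul_X p j ih => fin_cases j <;> simp [polyInX, ← ih]

lemma derivative_polyInX (a b : ℝ) (p : MvPolynomial (Fin 3) ℝ) :
    Polynomial.derivative (polyInX a b p) = polyInX a b (pderiv 2 p) := by
  induction p using MvPolynomial.induction_on with
  | C r => simp [polyInX]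
  | add p q hp hq => simp [hp, hq]
  | mul_X p j ih =>
    rw [map_mul, Polynomial.derivative_mul, ih, Derivation.leibniz, smul_eq_mul, smul_eq_mul]
    fin_cases j <;> simp [polyInX, pderiv_X] <;> ring

lemma iterate_derivative_polyInX (a b : ℝ) (p : MvPolynomial (Fin 3) ℝ) (k : ℕ) :
    Polynomial.derivative^[k] (polyInX a b p) = polyInX a b ((pderiv 2)^[k] p) :=
  (Function.Semiconj.iterate_right (fun p => (derivative_polyInX a b p).symm) k p).symm

lemma integral_eval_eq_eval_antideriv (a b x : ℝ) (p : MvPolynomial (Fin 3) ℝ) :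
    ∫ y in (0 : ℝ)..x, eval ![a, b, y] p = eval ![a, b, x] (antideriv 2 p) := by
  have hderiv : ∀ y,
      HasDerivAt (fun y => eval ![a, b, y] (antideriv 2 p)) (eval ![a, b, y] p) y := by
    intro y
    simpa only [← eval_polyInX, derivative_polyInX, pderiv_antideriv] using
      (polyInX a b (antideriv 2 p)).hasDerivAt y
  have hint : IntervalIntegrable (fun y => eval ![a, b, y] p) volume 0 x := by
    simpa only [eval_polyInX] using (polyInX a b p).continuous.intervalIntegrable 0 x
  rw [intervalIntegral.integral_eq_sub_of_hasDerivAt (fun y _ => hderiv y) hint,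
    eval_antideriv (x := ![a, b, 0]) rfl p, sub_zero]

lemma integral_Ioi_eval_mul_exp_neg_mul_eq_expTail (a b x : ℝ) {c : ℝ} (hc : 0 < c)
    (p : MvPolynomial (Fin 3) ℝ) :
    ∫ y in Ioi x, eval ![a, b, y] p * exp (-c * y) =
      exp (-c * x) * eval ![a, b, x] (expTail 2 c p) := by
  simp_rw [← eval_polyInX]
  rw [Polynomial.integral_Ioi_eval_mul_exp_neg_mul _ hc (N := degreeOf 2 p + 1)]
  · simp [expTail, iterate_derivative_polyInX, Polynomial.eval_finsetSum, div_eq_inv_mul]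
  · rw [iterate_derivative_polyInX, iterate_pderiv_eq_zero (Nat.lt_succ_self _), map_zero]

noncomputable def catalanStep (p : MvPolynomial (Fin 3) ℝ) : MvPolynomial (Fin 3) ℝ :=
  C 2 * (X 0 * antideriv 2 p + X 1 * expTail 2 2 p)

lemma eval_catalanStep (a b x : ℝ) (p : MvPolynomial (Fin 3) ℝ) :
    eval ![a, b, x] (catalanStep p) =
      2 * (a * ∫ y in (0 : ℝ)..x, eval ![a, b, y] p)
      + 2 * (exp (2 * x) * b * ∫ y in Ioi x, eval ![a, b, y] p * exp (-2 * y)) := by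
  have hexp : exp (2 * x) * exp (-2 * x) = 1 := by rw [← exp_add]; simp
  rw [integral_eval_eq_eval_antideriv, integral_Ioi_eval_mul_exp_neg_mul_eq_expTail _ _ _ two_pos]
  simp only [catalanStep, map_mul, map_add, eval_C, eval_X, Matrix.cons_val_zero,
    Matrix.cons_val_one]
  linear_combination (-2 * b * eval ![a, b, x] (expTail 2 2 p)) * hexp

lemma isWeightedHomogeneous_catalanStep {p : MvPolynomial (Fin 3) ℝ} {n : ℕ}
    (hp : IsWeightedHomogeneous ![1, 1, 0] p n) :
    IsWeightedHomogeneous ![1, 1, 0] (catalanStep p) (n + 1) := by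
  have h0 : IsWeightedHomogeneous ![1, 1, 0] (X 0 * antideriv 2 p) (1 + n) :=
    (isWeightedHomogeneous_X ℝ _ 0).mul (hp.antideriv rfl)
  have h1 : IsWeightedHomogeneous ![1, 1, 0] (X 1 * expTail 2 2 p) (1 + n) :=
    (isWeightedHomogeneous_X ℝ _ 1).mul (hp.expTail rfl 2)
  simpa [catalanStep, add_comm] using
    (isWeightedHomogeneous_C ![1, 1, 0] (2 : ℝ)).mul (h0.add h1)

lemma degreeOf_catalanStep_le (p : MvPolynomial (Fin 3) ℝ) :
    degreeOf 2 (catalanStep p) ≤ degreeOf 2 p + 1 := by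
  refine (degreeOf_C_mul_le _ _ _).trans <| (degreeOf_add_le _ _ _).trans <| max_le ?_ ?_
  · refine (degreeOf_mul_le _ _ _).trans ?_
    simpa [degreeOf_X_of_ne] using degreeOf_antideriv_le p
  · refine (degreeOf_mul_le _ _ _).trans ?_
    simpa [degreeOf_X_of_ne] using (degreeOf_expTail_le 2 p).trans (Nat.le_succ _)

lemma coeff_catalanStep (p : MvPolynomial (Fin 3) ℝ) (n : ℕ) :
    coeff (Finsupp.single 0 (n + 2) + Finsupp.single 2 (n + 1)) (catalanStep p) =
      2 * (coeff (Finsupp.single 0 (n + 1) + Finsupp.single 2 n) p / (n + 1)) := by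
  have hm : Finsupp.single 0 (n + 2) + Finsupp.single 2 (n + 1) = Finsupp.single 0 1 +
      (Finsupp.single 0 (n + 1) + Finsupp.single 2 n + Finsupp.single (2 : Fin 3) 1) := by
    ext j
    fin_cases j <;> simp; omega
  rw [catalanStep, coeff_C_mul, coeff_add, coeff_X_mul' _ 1, if_neg (by simp), add_zero, hm,
    coeff_X_mul, coeff_antideriv_add_single]
  simp

noncomputable def catalanPoly : ℕ → MvPolynomial (Fin 3) ℝ
  | 0 => 0
  | 1 => C 2 * X 0
  | n + 2 => catalanStep (catalanPoly (n + 1))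

lemma isWeightedHomogeneous_catalanPoly (n : ℕ) :
    IsWeightedHomogeneous ![1, 1, 0] (catalanPoly (n + 1)) (n + 1) := by
  induction n with
  | zero =>
    simpa [catalanPoly] using
      (isWeightedHomogeneous_C ![1, 1, 0] (2 : ℝ)).mul (isWeightedHomogeneous_X ℝ _ 0)
  | succ n ih => exact isWeightedHomogeneous_catalanStep ih

lemma degreeOf_catalanPoly_le (n : ℕ) : degreeOf 2 (catalanPoly (n + 1)) ≤ n := by
  induction n with
  | zero => exact (degreeOf_C_mul_le _ _ _).trans (degreeOf_X_of_ne (by decide)).le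
  | succ n ih => exact (degreeOf_catalanStep_le _).trans (Nat.succ_le_succ ih)

lemma coeff_catalanPoly_ne_zero (n : ℕ) :
    coeff (Finsupp.single 0 (n + 1) + Finsupp.single 2 n) (catalanPoly (n + 1)) ≠ 0 := by
  induction n with
  | zero => simp [catalanPoly, coeff_C_mul, coeff_X]
  | succ n ih =>
    rw [catalanPoly, coeff_catalanStep]
    exact mul_ne_zero two_ne_zero (div_ne_zero ih (Nat.cast_add_one_ne_zero n))

lemma degreeOf_catalanPoly (n : ℕ) : degreeOf 2 (catalanPoly (n + 1)) = n :=
  (degreeOf_catalanPoly_le n).antisymm <| by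
    simpa using monomial_le_degreeOf 2 (mem_support_iff.mpr (coeff_catalanPoly_ne_zero n))

lemma integral_mul_kernel {h : ℝ → ℝ} (a b : ℝ) {x : ℝ} (hx : 0 ≤ x)
    (h0 : IntegrableOn h (Ioc 0 x)) (hinf : IntegrableOn (fun y => h y * exp (-2 * y)) (Ioi x)) :
    ∫ y, h y * (if 0 ≤ y then (1 : ℝ) else 0) * exp (-y) *
        (2 * (a * (if 0 ≤ x - y then (1 : ℝ) else 0) + b * (if x - y < 0 then (1 : ℝ) else 0)) *
          exp (-|x - y|))
      = exp (-x) * (2 * (a * ∫ y in (0 : ℝ)..x, h y)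
          + 2 * (exp (2 * x) * b * ∫ y in Ioi x, h y * exp (-2 * y))) := by
  set F : ℝ → ℝ := fun y => h y * exp (-y) *
    (2 * (a * (if 0 ≤ x - y then (1 : ℝ) else 0) + b * (if x - y < 0 then (1 : ℝ) else 0)) *
      exp (-|x - y|))
  have hind : (fun y => h y * (if 0 ≤ y then (1 : ℝ) else 0) * exp (-y) *
      (2 * (a * (if 0 ≤ x - y then (1 : ℝ) else 0) + b * (if x - y < 0 then (1 : ℝ) else 0)) *
        exp (-|x - y|))) = (Ici 0).indicator F := by
    ext y
    by_cases hy : 0 ≤ y <;> simp [F, hy]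
  have hnear : EqOn F (fun y => 2 * a * exp (-x) * h y) (Ioc 0 x) := by
    intro y ⟨_, hyx⟩
    have hxy : 0 ≤ x - y := sub_nonneg.mpr hyx
    simp only [F, if_pos hxy, if_neg (not_lt.mpr hxy), abs_of_nonneg hxy]
    rw [show exp (-x) = exp (-y) * exp (-(x - y)) by rw [← exp_add]; ring_nf]
    ring
  have hfar : EqOn F (fun y => 2 * b * exp x * (h y * exp (-2 * y))) (Ioi x) := by
    intro y hy
    have hxy : x - y < 0 := sub_neg.mpr hy
    simp only [F, if_neg (not_le.mpr hxy), if_pos hxy, abs_of_neg hxy]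
    have hexp : exp (-y) * exp (-(-(x - y))) = exp x * exp (-2 * y) := by
      rw [← exp_add, ← exp_add]; ring_nf
    linear_combination 2 * b * h y * hexp
  have hexp : exp (-x) * exp (2 * x) = exp x := by rw [← exp_add]; ring_nf
  rw [hind, integral_indicator measurableSet_Ici, integral_Ici_eq_integral_Ioi,
    ← Ioc_union_Ioi_eq_Ioi hx, setIntegral_union (Ioc_disjoint_Ioi le_rfl) measurableSet_Ioi
      (IntegrableOn.congr_fun (h0.const_mul _) hnear.symm measurableSet_Ioc)
      (IntegrableOn.congr_fun (hinf.const_mul _) hfar.symm measurableSet_Ioi),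
    setIntegral_congr_fun measurableSet_Ioc hnear, setIntegral_congr_fun measurableSet_Ioi hfar,
    integral_const_mul, integral_const_mul, intervalIntegral.integral_of_le hx]
  linear_combination (-2 * b * ∫ y in Ioi x, h y * exp (-2 * y)) * hexp

lemma eq_eval_catalanPoly_of_recursion (a b : ℝ) (g : ℕ → ℝ → ℝ)
    (hg₁ : ∀ x, g 1 x = (if 0 ≤ x then (1 : ℝ) else 0) * (2 * a * exp (-x)))
    (hg : ∀ m : ℕ, 1 ≤ m → ∀ x, g (m + 1) x = (if 0 ≤ x then (1 : ℝ) else 0) *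
      ∫ y, g m y * (2 * (a * (if 0 ≤ x - y then (1 : ℝ) else 0)
        + b * (if x - y < 0 then (1 : ℝ) else 0)) * exp (-|x - y|)))
    (n : ℕ) (x : ℝ) :
    g (n + 1) x =
      eval ![a, b, x] (catalanPoly (n + 1)) * (if 0 ≤ x then (1 : ℝ) else 0) * exp (-x) := by
  induction n generalizing x with
  | zero =>
    rw [hg₁]
    simp only [catalanPoly, map_mul, eval_C, eval_X, Matrix.cons_val_zero]
    ring
  | succ n ih =>
    rw [hg (n + 1) n.succ_pos x]
    simp only [ih]
    split_ifs with hx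
    · have hcont : Continuous fun y => eval ![a, b, y] (catalanPoly (n + 1)) := by
        simpa only [eval_polyInX] using (polyInX a b (catalanPoly (n + 1))).continuous
      have hinf : IntegrableOn (fun y => eval ![a, b, y] (catalanPoly (n + 1)) * exp (-2 * y))
          (Ioi x) := by
        simpa only [eval_polyInX] using
          (polyInX a b (catalanPoly (n + 1))).integrableOn_eval_mul_exp_neg_mul two_pos x
      rw [integral_mul_kernel a b hx hcont.integrableOn_Ioc hinf, catalanPoly, eval_catalanStep]
      ring
    · simp

/-- There are polynomials `P_n(a,b,x)` (variables `0 ↦ a`, `1 ↦ b`, `2 ↦ x`),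
of degree `n−1` in `x` and homogeneous of degree `n` in `a,b`, such that
`g_n(x) = P_n(a,b,x) σ₊(x) e^{−x}` where `g₁(x) = 2a σ₊(x) e^{−x}` and
`g_{n+1} = σ₊ · (g_n * f)` with `f(x) = 2(a σ₊(x) + b σ₋(x)) e^{−|x|}`; the `P_n`
satisfy `P₁ = 2a` and the integral recursion
`P_{n+1}(x) = 2(a ∫₀ˣ P_n(y) dy + e^{2x} b ∫ₓ^∞ P_n(y) e^{−2y} dy)`. -/
theorem catalan_convolution_polynomials :
    ∃ P : ℕ → MvPolynomial (Fin 3) ℝ,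
      P 1 = 2 * MvPolynomial.X 0 ∧
      ∀ n : ℕ, 1 ≤ n →
        MvPolynomial.degreeOf 2 (P n) = n - 1 ∧
        (P n).IsWeightedHomogeneous ![1, 1, 0] n ∧
        (∀ a b x : ℝ,
          MvPolynomial.eval ![a, b, x] (P (n + 1)) =
            2 * (a * ∫ y in (0 : ℝ)..x, MvPolynomial.eval ![a, b, y] (P n))
            + 2 * (Real.exp (2 * x) * b *
                ∫ y in Set.Ioi x,
                  MvPolynomial.eval ![a, b, y] (P n) * Real.exp (-2 * y))) ∧
        (∀ a b : ℝ, ∀ g : ℕ → ℝ → ℝ,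
          (∀ x, g 1 x = (if 0 ≤ x then (1 : ℝ) else 0) * (2 * a * Real.exp (-x))) →
          (∀ m : ℕ, 1 ≤ m → ∀ x, g (m + 1) x =
            (if 0 ≤ x then (1 : ℝ) else 0) *
              ∫ y, g m y *
                (2 * (a * (if 0 ≤ x - y then (1 : ℝ) else 0)
                    + b * (if x - y < 0 then (1 : ℝ) else 0)) *
                  Real.exp (-|x - y|))) →
          ∀ x, g n x =
            MvPolynomial.eval ![a, b, x] (P n) *
              (if 0 ≤ x then (1 : ℝ) else 0) * Real.exp (-x)) := by
  refine ⟨catalanPoly, by rw [catalanPoly, map_ofNat], fun n hn => ?_⟩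
  obtain ⟨n, rfl⟩ := Nat.exists_eq_add_of_le' hn
  exact ⟨degreeOf_catalanPoly n, isWeightedHomogeneous_catalanPoly n,
    fun a b x => eval_catalanStep a b x _,
    fun a b g hg₁ hg => eq_eval_catalanPoly_of_recursion a b g hg₁ hg n⟩
end

section
/- Let u be a packed word of length n with associated ordered set partition (B₁,…,B_r) of {1,…,n}. Then the cone K_u = {x ∈ ℝⁿ : Σ_{j≤k} Σ_{i∈B_j} x_i ≥ 0 for k = 1,…,r} equals the disjoint union over packed words v refining u of the cones C_v, where for the segmented permutation σ of v, C_v = {x ∈ ℝⁿ : Σ_{i=1}^{k} x_{σ_i} < 0 if σ_k is not the last element of its block, and ≥ 0 otherwise, for k=1,…,n}. In particular 𝟙_{K_u} = Σ_{v ⪯ u} 𝟙_{C_v}. -/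
/-- A word `u : Fin n → ℕ` is packed: its values are exactly `{1, …, max u}`. -/
def IsPacked {n : ℕ} (u : Fin n → ℕ) : Prop :=
  (∀ i, 1 ≤ u i) ∧ ∀ i k, 1 ≤ k → k ≤ u i → ∃ j, u j = k

/-- `v` refines `u` (`v ⪯ u`): `v` is packed, its set composition is obtained from
that of `u` by splitting blocks, and `v` and `u` have the same standardization
(within a block of `u`, elements are distributed into blocks of `v` in increasing
order — bars are inserted into the segmented permutation of `u`). -/
def Refines {n : ℕ} (v u : Fin n → ℕ) : Prop :=
  IsPacked v ∧ (∀ i j, u i < u j → v i < v j) ∧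
    ∀ i j, u i = u j → i < j → v i ≤ v j

/-- The cone `K_u = {x ∈ ℝⁿ : Σ_{j≤k} Σ_{i∈B_j} x_i ≥ 0, k = 1,…,r}` of the set
composition `(B₁,…,B_r)` encoded by the packed word `u`. -/
def Kcone {n : ℕ} (u : Fin n → ℕ) : Set (Fin n → ℝ) :=
  {x | ∀ k : ℕ, (∃ i, u i = k) →
    0 ≤ ∑ j ∈ Finset.univ.filter (fun j => u j ≤ k), x j}

/-- The partial sum `x_{σ₁} + ⋯ + x_{σ_k}` along the segmented permutation `σ` of
`v` up to the position `k` where the element `i` occurs: `j` precedes `i` iff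
`v j < v i`, or `v j = v i` and `j ≤ i`. -/
noncomputable def PartSum {n : ℕ} (v : Fin n → ℕ) (x : Fin n → ℝ) (i : Fin n) : ℝ :=
  ∑ j ∈ Finset.univ.filter (fun j => v j < v i ∨ (v j = v i ∧ j ≤ i)), x j

/-- The cone `C_v`: the partial sum at position `k` is `≥ 0` if `σ_k` ends a block
of the segmented permutation of `v` (i.e. is the largest element of its block),
and `< 0` otherwise. -/
def Ccone {n : ℕ} (v : Fin n → ℕ) : Set (Fin n → ℝ) :=
  {x | ∀ i,
    ((∀ j, v j = v i → j ≤ i) → 0 ≤ PartSum v x i) ∧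
    (¬ (∀ j, v j = v i → j ≤ i) → PartSum v x i < 0)}

namespace KCaux

variable {n : ℕ}

def key (u : Fin n → ℕ) (i : Fin n) : ℕ := u i * n + i

lemma key_lt_iff (u : Fin n → ℕ) (m i : Fin n) :
    key u m < key u i ↔ u m < u i ∨ (u m = u i ∧ m < i) := by
  unfold key
  have hm : (m : ℕ) < n := m.isLt
  have hi : (i : ℕ) < n := i.isLt
  rw [Fin.lt_def]
  constructor
  · intro h
    rcases lt_trichotomy (u m) (u i) with h1 | h1 | h1
    · exact Or.inl h1
    · right; rw [h1] at h; exact ⟨h1, by omega⟩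
    · exfalso; nlinarith
  · rintro (h1 | ⟨h1, h2⟩)
    · nlinarith
    · rw [h1]; omega

lemma key_inj (u : Fin n → ℕ) {m i : Fin n} (h : key u m = key u i) : m = i := by
  rcases lt_trichotomy (u m) (u i) with h1 | h1 | h1
  · exact absurd h (ne_of_lt ((key_lt_iff u m i).2 (Or.inl h1)))
  · unfold key at h; rw [h1] at h
    exact Fin.ext (by omega)
  · exact absurd h.symm (ne_of_lt ((key_lt_iff u i m).2 (Or.inl h1)))

lemma key_le_iff (u : Fin n → ℕ) (m i : Fin n) :
    key u m ≤ key u i ↔ u m < u i ∨ (u m = u i ∧ m ≤ i) := by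
  rw [le_iff_lt_or_eq, key_lt_iff]
  constructor
  · rintro ((h | ⟨h1, h2⟩) | h)
    · exact Or.inl h
    · exact Or.inr ⟨h1, le_of_lt h2⟩
    · rcases key_inj u h with rfl; exact Or.inr ⟨rfl, le_refl _⟩
  · rintro (h | ⟨h1, h2⟩)
    · exact Or.inl (Or.inl h)
    · rcases eq_or_lt_of_le h2 with h3 | h3
      · subst h3; exact Or.inr rfl
      · exact Or.inl (Or.inr ⟨h1, h3⟩)

lemma pre_iff_key (u : Fin n → ℕ) (i j : Fin n) :
    (u j < u i ∨ (u j = u i ∧ j ≤ i)) ↔ key u j ≤ key u i := (key_le_iff u j i).symm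

lemma refine_pre_iff {v u : Fin n → ℕ}
    (h1 : ∀ i j, u i < u j → v i < v j)
    (h2 : ∀ i j, u i = u j → i < j → v i ≤ v j) (i j : Fin n) :
    (v j < v i ∨ (v j = v i ∧ j ≤ i)) ↔ (u j < u i ∨ (u j = u i ∧ j ≤ i)) := by
  constructor
  · intro h
    by_contra hne
    push_neg at hne
    obtain ⟨hn1, hn2⟩ := hne
    rcases lt_trichotomy (u i) (u j) with h3 | h3 | h3
    · have := h1 i j h3
      rcases h with h | ⟨h4, _⟩ <;> omega
    · have hij : i < j := hn2 h3.symm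
      have := h2 i j h3 hij
      rcases h with h | ⟨h4, h5⟩
      · omega
      · exact absurd h5 (not_le.mpr hij)
    · exact absurd h3 (not_lt.mpr hn1)
  · rintro (h | ⟨h1', h2'⟩)
    · exact Or.inl (h1 j i h)
    · rcases eq_or_lt_of_le h2' with h3 | h3
      · subst h3; exact Or.inr ⟨rfl, le_refl _⟩
      · rcases eq_or_lt_of_le (h2 j i h1' h3) with h4 | h4
        · exact Or.inr ⟨h4, h2'⟩
        · exact Or.inl h4

lemma partSum_eq {v u : Fin n → ℕ}
    (h1 : ∀ i j, u i < u j → v i < v j)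
    (h2 : ∀ i j, u i = u j → i < j → v i ≤ v j)
    (x : Fin n → ℝ) (i : Fin n) : PartSum v x i = PartSum u x i := by
  unfold PartSum
  congr 1
  apply Finset.filter_congr
  intro j _
  exact refine_pre_iff h1 h2 i j


open Classical

lemma mem_Kcone_iff (u : Fin n → ℕ) (x : Fin n → ℝ) :
    x ∈ Kcone u ↔ ∀ i, (∀ j, u j = u i → j ≤ i) → 0 ≤ PartSum u x i := by
  constructor
  · intro h i hi
    have h0 := h (u i) ⟨i, rfl⟩
    have heq : Finset.univ.filter (fun j => u j ≤ u i)
        = Finset.univ.filter (fun j => u j < u i ∨ (u j = u i ∧ j ≤ i)) := by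
      apply Finset.filter_congr
      intro j _
      constructor
      · intro hj
        rcases eq_or_lt_of_le hj with h3 | h3
        · exact Or.inr ⟨h3, hi j h3⟩
        · exact Or.inl h3
      · rintro (h3 | ⟨h3, _⟩) <;> omega
    rw [heq] at h0
    exact h0
  · intro h k hk
    obtain ⟨i0, hi0⟩ := hk
    have hne : (Finset.univ.filter (fun j => u j = k)).Nonempty :=
      ⟨i0, by simp [hi0]⟩
    set i := (Finset.univ.filter (fun j => u j = k)).max' hne with hidef
    have hik : u i = k := by
      have := (Finset.univ.filter (fun j => u j = k)).max'_mem hne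
      simpa using this
    have hmax : ∀ j, u j = k → j ≤ i := by
      intro j hj
      exact Finset.le_max' _ j (by simp [hj])
    have hbm : ∀ j, u j = u i → j ≤ i := fun j hj => hmax j (hj.trans hik)
    have h0 := h i hbm
    have heq : Finset.univ.filter (fun j => u j < u i ∨ (u j = u i ∧ j ≤ i))
        = Finset.univ.filter (fun j => u j ≤ k) := by
      apply Finset.filter_congr
      intro j _
      rw [hik]
      constructor
      · rintro (h3 | ⟨h3, _⟩) <;> omega
      · intro hj
        rcases eq_or_lt_of_le hj with h3 | h3
        · exact Or.inr ⟨h3, hmax j h3⟩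
        · exact Or.inl h3
    unfold PartSum at h0
    rw [heq] at h0
    exact h0

lemma mem_Ccone_iff (v : Fin n → ℕ) (x : Fin n → ℝ) :
    x ∈ Ccone v ↔ ∀ i, ((∀ j, v j = v i → j ≤ i) ↔ 0 ≤ PartSum v x i) := by
  constructor
  · intro h i
    constructor
    · exact (h i).1
    · intro hs
      by_contra hb
      exact absurd hs (not_le.mpr ((h i).2 hb))
  · intro h i
    exact ⟨fun hb => (h i).1 hb, fun hb => not_le.mp (fun hs => hb ((h i).2 hs))⟩

noncomputable def W (u : Fin n → ℕ) (x : Fin n → ℝ) (i : Fin n) : ℕ :=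
  1 + (Finset.univ.filter (fun m => key u m < key u i ∧ 0 ≤ PartSum u x m)).card

lemma W_le (u : Fin n → ℕ) (x : Fin n → ℝ) (i : Fin n) : W u x i ≤ n := by
  unfold W
  have hsub : Finset.univ.filter (fun m => key u m < key u i ∧ 0 ≤ PartSum u x m)
      ⊆ Finset.univ.erase i := by
    intro m hm
    simp only [Finset.mem_filter] at hm
    refine Finset.mem_erase.mpr ⟨?_, Finset.mem_univ m⟩
    rintro rfl
    exact absurd hm.2.1 (lt_irrefl _)
  have := Finset.card_le_card hsub
  have hc : (Finset.univ.erase i).card = n - 1 := by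
    rw [Finset.card_erase_of_mem (Finset.mem_univ i), Finset.card_univ, Fintype.card_fin]
  have hn : 1 ≤ n := Nat.pos_of_ne_zero (fun h => by subst h; exact i.elim0)
  omega

lemma W_mono (u : Fin n → ℕ) (x : Fin n → ℝ) {i j : Fin n}
    (h : key u i ≤ key u j) : W u x i ≤ W u x j := by
  unfold W
  have : Finset.univ.filter (fun m => key u m < key u i ∧ 0 ≤ PartSum u x m)
      ⊆ Finset.univ.filter (fun m => key u m < key u j ∧ 0 ≤ PartSum u x m) := by
    intro m hm
    simp only [Finset.mem_filter] at hm ⊢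
    exact ⟨hm.1, lt_of_lt_of_le hm.2.1 h, hm.2.2⟩
  have := Finset.card_le_card this
  omega

lemma W_lt_of_stop (u : Fin n → ℕ) (x : Fin n → ℝ) {i j : Fin n}
    (h : key u i < key u j) (hs : 0 ≤ PartSum u x i) : W u x i < W u x j := by
  unfold W
  have hss : Finset.univ.filter (fun m => key u m < key u i ∧ 0 ≤ PartSum u x m)
      ⊂ Finset.univ.filter (fun m => key u m < key u j ∧ 0 ≤ PartSum u x m) := by
    rw [Finset.ssubset_iff_of_subset]
    · exact ⟨i, by simp [h, hs], by simp⟩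
    · intro m hm
      simp only [Finset.mem_filter] at hm ⊢
      exact ⟨hm.1, lt_trans hm.2.1 h, hm.2.2⟩
  have := Finset.card_lt_card hss
  omega

lemma blockmax_exists (v : Fin n → ℕ) (c : ℕ) (hex : ∃ j, v j = c) :
    ∃ m, v m = c ∧ ∀ j, v j = v m → j ≤ m := by
  obtain ⟨j0, hj0⟩ := hex
  have hne : (Finset.univ.filter (fun j => v j = c)).Nonempty := ⟨j0, by simp [hj0]⟩
  set m := (Finset.univ.filter (fun j => v j = c)).max' hne
  have hm : v m = c := by
    have := (Finset.univ.filter (fun j => v j = c)).max'_mem hne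
    simpa using this
  exact ⟨m, hm, fun j hj => Finset.le_max' _ j (by simp [hj.trans hm])⟩

lemma refines_ccone_eq_W {v u : Fin n → ℕ} (hr : Refines v u) {x : Fin n → ℝ}
    (hx : x ∈ Ccone v) (i : Fin n) : v i = W u x i := by
  obtain ⟨⟨hv1, hv2⟩, h1, h2⟩ := hr
  have hps : ∀ j, PartSum v x j = PartSum u x j := partSum_eq h1 h2 x
  have hbm : ∀ m : Fin n, (∀ j, v j = v m → j ≤ m) ↔ 0 ≤ PartSum u x m := by
    intro m
    rw [← hps m]
    exact (mem_Ccone_iff v x).1 hx m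
  have hcard : (Finset.univ.filter
      (fun m => key u m < key u i ∧ 0 ≤ PartSum u x m)).card = v i - 1 := by
    rw [show v i - 1 = (Finset.Ico 1 (v i)).card by simp]
    apply Finset.card_bij (fun m _ => v m)
    · -- maps into Ico
      intro m hm
      simp only [Finset.mem_filter] at hm
      obtain ⟨_, hkey, hstop⟩ := hm
      have hbmm := (hbm m).2 hstop
      rw [Finset.mem_Ico]
      refine ⟨hv1 m, ?_⟩
      rcases (key_lt_iff u m i).1 hkey with h3 | ⟨h3, h4⟩
      · exact h1 m i h3
      · have hle := h2 m i h3 h4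
        rcases eq_or_lt_of_le hle with h5 | h5
        · exact absurd (hbmm i h5.symm) (not_le.mpr h4)
        · exact h5
    · -- injective
      intro m hm m' hm' hv
      simp only [Finset.mem_filter] at hm hm'
      have b1 := (hbm m).2 hm.2.2
      have b2 := (hbm m').2 hm'.2.2
      exact le_antisymm (b2 m hv) (b1 m' hv.symm)
    · -- surjective
      intro c hc
      rw [Finset.mem_Ico] at hc
      obtain ⟨m, hm, hmax⟩ := blockmax_exists v c (hv2 i c hc.1 (le_of_lt hc.2))
      refine ⟨m, ?_, hm⟩
      simp only [Finset.mem_filter]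
      refine ⟨Finset.mem_univ m, ?_, (hbm m).1 hmax⟩
      rw [key_lt_iff]
      have hlt : v m < v i := hm ▸ hc.2
      rcases lt_trichotomy (u m) (u i) with h3 | h3 | h3
      · exact Or.inl h3
      · right
        refine ⟨h3, ?_⟩
        rcases lt_trichotomy m i with h4 | h4 | h4
        · exact h4
        · exact absurd hlt (by rw [h4]; exact lt_irrefl _)
        · exact absurd (h2 i m h3.symm h4) (not_le.mpr hlt)
      · exact absurd (h1 i m h3) (not_lt.mpr (le_of_lt hlt))
  unfold W
  have := hv1 i
  omega

lemma ccone_sub_kcone {v u : Fin n → ℕ} (hr : Refines v u) {x : Fin n → ℝ}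
    (hx : x ∈ Ccone v) : x ∈ Kcone u := by
  obtain ⟨⟨hv1, hv2⟩, h1, h2⟩ := hr
  rw [mem_Kcone_iff]
  intro i hi
  have hvbm : ∀ j, v j = v i → j ≤ i := by
    intro j hj
    rcases lt_trichotomy (u j) (u i) with h3 | h3 | h3
    · exact absurd (h1 j i h3) (by rw [hj]; exact lt_irrefl _)
    · exact hi j h3
    · exact absurd (h1 i j h3) (by rw [hj]; exact lt_irrefl _)
  rw [← partSum_eq h1 h2 x i]
  exact ((mem_Ccone_iff v x).1 hx i).1 hvbm

lemma W_refines {u : Fin n → ℕ} {x : Fin n → ℝ}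
    (hK : ∀ i, (∀ j, u j = u i → j ≤ i) → 0 ≤ PartSum u x i) :
    Refines (W u x) u := by
  have hmono1 : ∀ i j : Fin n, u i < u j → W u x i < W u x j := by
    intro i j hij
    obtain ⟨i', hi'val, hi'max⟩ := blockmax_exists u (u i) ⟨i, rfl⟩
    have hstop : 0 ≤ PartSum u x i' := hK i' hi'max
    have h1 : key u i ≤ key u i' := by
      rw [key_le_iff]
      exact Or.inr ⟨hi'val.symm ▸ rfl, hi'max i hi'val.symm⟩
    have h2 : key u i' < key u j := by
      rw [key_lt_iff]
      exact Or.inl (hi'val ▸ hij)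
    exact lt_of_le_of_lt (W_mono u x h1) (W_lt_of_stop u x h2 hstop)
  refine ⟨⟨fun i => by unfold W; omega, ?_⟩, hmono1, ?_⟩
  · -- packedness
    intro i k hk1 hk2
    by_contra hne
    push_neg at hne
    have hT : (Finset.univ.filter (fun j => k ≤ W u x j)).Nonempty := ⟨i, by simp [hk2]⟩
    obtain ⟨j, hjT, hjmin⟩ := Finset.exists_min_image _ (key u) hT
    simp only [Finset.mem_filter] at hjT
    have hklt : k < W u x j := lt_of_le_of_ne hjT.2 (Ne.symm (hne j))
    set Fj := Finset.univ.filter (fun m => key u m < key u j ∧ 0 ≤ PartSum u x m) with hFj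
    have hFjcard : W u x j = 1 + Fj.card := rfl
    have hFjne : Fj.Nonempty := Finset.card_pos.mp (by omega)
    obtain ⟨m, hmF, hmmax⟩ := Finset.exists_max_image _ (key u) hFjne
    have hmF' := hmF
    simp only [hFj, Finset.mem_filter] at hmF'
    have hFm : Finset.univ.filter (fun b => key u b < key u m ∧ 0 ≤ PartSum u x b)
        = Fj.erase m := by
      ext b
      simp only [hFj, Finset.mem_filter, Finset.mem_erase, Finset.mem_univ, true_and]
      constructor
      · rintro ⟨hb1, hb2⟩
        exact ⟨fun h => absurd hb1 (h ▸ lt_irrefl _), lt_trans hb1 hmF'.2.1, hb2⟩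
      · rintro ⟨hbne, hb1, hb2⟩
        refine ⟨?_, hb2⟩
        have := hmmax b (by simp [hFj, hb1, hb2])
        rcases lt_or_eq_of_le this with h | h
        · exact h
        · exact absurd (key_inj u h) hbne
    have hWm : W u x m = Fj.card := by
      unfold W
      rw [hFm, Finset.card_erase_of_mem hmF]
      have : 1 ≤ Fj.card := Finset.card_pos.mpr hFjne
      omega
    have hmT : m ∈ Finset.univ.filter (fun j => k ≤ W u x j) := by
      simp only [Finset.mem_filter]
      exact ⟨Finset.mem_univ m, by omega⟩
    have := hjmin m hmT
    exact absurd hmF'.2.1 (not_lt.mpr this)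
  · -- weak mono within blocks
    intro i j hij hlt
    apply W_mono
    rw [key_le_iff]
    exact Or.inr ⟨hij, le_of_lt hlt⟩

lemma W_mem_Ccone {u : Fin n → ℕ} {x : Fin n → ℝ}
    (hK : ∀ i, (∀ j, u j = u i → j ≤ i) → 0 ≤ PartSum u x i) :
    x ∈ Ccone (W u x) := by
  have hr := W_refines hK
  obtain ⟨_, h1, h2⟩ := hr
  rw [mem_Ccone_iff]
  intro i
  rw [partSum_eq h1 h2 x i]
  constructor
  · -- blockmax → stop
    intro hb
    by_contra hs
    push_neg at hs
    -- i is not a u-blockmax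
    have hnotubm : ¬ (∀ j, u j = u i → j ≤ i) := by
      intro h
      exact absurd (hK i h) (not_le.mpr hs)
    push_neg at hnotubm
    obtain ⟨j0, hj0, hj0i⟩ := hnotubm
    have hT : (Finset.univ.filter (fun j => u j = u i ∧ i < j)).Nonempty :=
      ⟨j0, by simp [hj0, hj0i]⟩
    set j := (Finset.univ.filter (fun j => u j = u i ∧ i < j)).min' hT with hjdef
    have hjmem : u j = u i ∧ i < j := by
      have hmm := (Finset.univ.filter (fun j => u j = u i ∧ i < j)).min'_mem hT
      rw [Finset.mem_filter] at hmm
      exact hmm.2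
    have hjmin : ∀ b, u b = u i → i < b → j ≤ b := by
      intro b hb1 hb2
      exact Finset.min'_le _ b (by simp [hb1, hb2])
    have hkij : key u i < key u j := by
      rw [key_lt_iff]; exact Or.inr ⟨hjmem.1.symm, hjmem.2⟩
    have hWeq : W u x j = W u x i := by
      have hfe : Finset.univ.filter (fun m => key u m < key u j ∧ 0 ≤ PartSum u x m)
          = Finset.univ.filter (fun m => key u m < key u i ∧ 0 ≤ PartSum u x m) := by
        apply Finset.filter_congr
        intro b _
        constructor
        · rintro ⟨hb1, hb2⟩
          refine ⟨?_, hb2⟩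
          rcases lt_trichotomy (key u b) (key u i) with h3 | h3 | h3
          · exact h3
          · exact absurd hb2 (by rw [key_inj u h3]; exact not_le.mpr hs)
          · exfalso
            rcases (key_lt_iff u i b).1 h3 with h4 | ⟨h4, h5⟩
            · rcases (key_lt_iff u b j).1 hb1 with h6 | ⟨h6, _⟩
              · omega
              · rw [h6, hjmem.1] at h4; omega
            · rcases (key_lt_iff u b j).1 hb1 with h6 | ⟨h6, h7⟩
              · rw [← h4, hjmem.1] at h6; omega
              · exact absurd h7 (not_lt.mpr (hjmin b (h4.symm) h5))
        · rintro ⟨hb1, hb2⟩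
          exact ⟨lt_trans hb1 hkij, hb2⟩
      unfold W
      rw [hfe]
    have := hb j hWeq
    exact absurd hjmem.2 (not_lt.mpr this)
  · -- stop → blockmax
    intro hs j hj
    have hnk : ¬ key u i < key u j := by
      intro h
      exact absurd hj (ne_of_gt (W_lt_of_stop u x h hs))
    rcases lt_trichotomy (key u j) (key u i) with h3 | h3 | h3
    · rcases (key_lt_iff u j i).1 h3 with h4 | ⟨h4, h5⟩
      · exact absurd hj (ne_of_lt (h1 j i h4))
      · exact le_of_lt h5
    · exact le_of_eq (key_inj u h3)
    · exact absurd h3 hnk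


noncomputable def Wfin (u : Fin n → ℕ) (x : Fin n → ℝ) : Fin n → Fin (n + 1) :=
  fun i => ⟨W u x i, Nat.lt_succ_of_le (W_le u x i)⟩

end KCaux

open Classical in
/-- `K_u` is the disjoint union of the cones `C_v` over the packed words `v`
refining `u`; in particular `𝟙_{K_u} = Σ_{v ⪯ u} 𝟙_{C_v}`. -/
theorem Kcone_eq_disjoint_union_Ccone {n : ℕ} (u : Fin n → ℕ)
    (hu : IsPacked u) :
    (Kcone u =
        ⋃ w ∈ {w : Fin n → Fin (n + 1) | Refines (fun i => (w i : ℕ)) u},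
          Ccone (fun i => (w i : ℕ))) ∧
      Set.PairwiseDisjoint
        {w : Fin n → Fin (n + 1) | Refines (fun i => (w i : ℕ)) u}
        (fun w => Ccone (fun i => (w i : ℕ))) ∧
      ∀ x, (Kcone u).indicator (fun _ => (1 : ℝ)) x =
        ∑ w ∈ Finset.univ.filter
            (fun w : Fin n → Fin (n + 1) => Refines (fun i => (w i : ℕ)) u),
          (Ccone fun i => (w i : ℕ)).indicator (fun _ => (1 : ℝ)) x := by
  classical
  have key1 : ∀ x : Fin n → ℝ, x ∈ Kcone u →
      Refines (fun i => ((KCaux.Wfin u x i : ℕ))) u ∧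
        x ∈ Ccone (fun i => ((KCaux.Wfin u x i : ℕ))) := by
    intro x hx
    have hK := (KCaux.mem_Kcone_iff u x).1 hx
    exact ⟨KCaux.W_refines hK, KCaux.W_mem_Ccone hK⟩
  refine ⟨?_, ?_, ?_⟩
  · ext x
    simp only [Set.mem_iUnion, Set.mem_setOf_eq, exists_prop]
    constructor
    · intro hx
      exact ⟨KCaux.Wfin u x, (key1 x hx).1, (key1 x hx).2⟩
    · rintro ⟨w, hw, hxw⟩
      exact KCaux.ccone_sub_kcone hw hxw
  · intro w hw w' hw' hne
    simp only [Set.mem_setOf_eq] at hw hw'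
    rw [Function.onFun, Set.disjoint_left]
    intro x hx hx'
    apply hne
    funext i
    apply Fin.ext
    exact (KCaux.refines_ccone_eq_W hw hx i).trans
      (KCaux.refines_ccone_eq_W hw' hx' i).symm
  · intro x
    by_cases hx : x ∈ Kcone u
    · rw [Set.indicator_of_mem hx]
      obtain ⟨hwr, hwc⟩ := key1 x hx
      rw [Finset.sum_eq_single_of_mem (KCaux.Wfin u x)
        (by simp only [Finset.mem_filter]; exact ⟨Finset.mem_univ _, hwr⟩) ?_]
      · rw [Set.indicator_of_mem hwc]
      · intro b hb hbne
        rw [Set.indicator_of_notMem]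
        intro hxb
        apply hbne
        simp only [Finset.mem_filter] at hb
        funext i
        exact Fin.ext ((KCaux.refines_ccone_eq_W hb.2 hxb i).trans
          (KCaux.refines_ccone_eq_W hwr hwc i).symm)
    · rw [Set.indicator_of_notMem hx]
      symm
      apply Finset.sum_eq_zero
      intro w hw
      simp only [Finset.mem_filter] at hw
      rw [Set.indicator_of_notMem]
      intro hxw
      exact hx (KCaux.ccone_sub_kcone hw.2 hxw)
end
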